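/- arXiv:1504.04554 — 9 statements merged into one kernel-verified Lean document; each statement's English description precedes it below -/
import Mathlib

section
/- Let K be an uncountable compact metrizable space. Then C(K) endowed with the sup-norm topology is homeomorphic neither to C_w(K) nor to C_p(K). -/
open Set TopologicalSpace

noncomputable section

/-- `C(K)` with the topology of pointwise convergence. -/
def Cp (K : Type*) [TopologicalSpace K] : Type _ := C(K, ℝ)

instance (K : Type*) [TopologicalSpace K] : TopologicalSpace (Cp K) :=
  TopologicalSpace.induced (fun f : C(K, ℝ) => (f : K → ℝ)) inferInstance

instance (K : Type*) [TopologicalSpace K] : Zero (Cp K) := ⟨(0 : C(K, ℝ))⟩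

/-- Evaluation of an element of `Cp K` at a point. -/
def Cp.toFun {K : Type*} [TopologicalSpace K] (f : Cp K) : K → ℝ :=
  ContinuousMap.toFun f

/-- `C(K)` (for `K` compact) with the weak topology of the Banach space `C(K)`:
the topology induced by all continuous linear functionals. -/
def Cw (K : Type*) [TopologicalSpace K] [CompactSpace K] : Type _ := C(K, ℝ)

instance (K : Type*) [TopologicalSpace K] [CompactSpace K] : TopologicalSpace (Cw K) :=
  TopologicalSpace.induced
    (fun (f : C(K, ℝ)) (φ : C(K, ℝ) →L[ℝ] ℝ) => φ f) inferInstance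

instance (K : Type*) [TopologicalSpace K] [CompactSpace K] : Zero (Cw K) := ⟨(0 : C(K, ℝ))⟩

/-- Evaluation of an element of `Cw K` at a point. -/
def Cw.toFun {K : Type*} [TopologicalSpace K] [CompactSpace K] (f : Cw K) : K → ℝ :=
  ContinuousMap.toFun f

section Aux

variable {K : Type*} [TopologicalSpace K] [CompactSpace K] [MetrizableSpace K]

/-- The identity map `Cp K → C(K, ℝ)`. -/
def Cp.toC (f : Cp K) : C(K, ℝ) := f

/-- The identity map `C(K, ℝ) → Cp K`. -/
def Cp.ofC (f : C(K, ℝ)) : Cp K := f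

/-- The identity map `Cw K → C(K, ℝ)`. -/
def Cw.toC (f : Cw K) : C(K, ℝ) := f

/-- The identity map `C(K, ℝ) → Cw K`. -/
def Cw.ofC (f : C(K, ℝ)) : Cw K := f

lemma exists_bumps [Infinite K] (m : ℕ) :
    ∃ (x : Fin m → K) (f : Fin m → C(K, ℝ)),
      Function.Injective x ∧ (∀ i, f i (x i) = 1) ∧ ∀ i j, i ≠ j → f i (x j) = 0 := by
  letI : MetricSpace K := TopologicalSpace.metrizableSpaceMetric K
  let e := Infinite.natEmbedding K
  set x : Fin m → K := fun i => e i with hxdef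
  have hx : Function.Injective x := by
    intro a b hab
    exact Fin.val_injective (e.injective hab)
  have H : ∀ i : Fin m, ∃ f : C(K, ℝ), f (x i) = 1 ∧ ∀ j, j ≠ i → f (x j) = 0 := by
    intro i
    have hclosed : IsClosed (x '' {j | j ≠ i}) :=
      (Set.Finite.image _ (Set.toFinite _)).isClosed
    obtain ⟨f, hf0, hf1, -⟩ :=
      exists_continuous_zero_one_of_isClosed hclosed isClosed_singleton
        (by
          rw [Set.disjoint_singleton_right]
          rintro ⟨j, hj, hji⟩
          exact hj (hx hji))
    refine ⟨f, by simpa using hf1 rfl, fun j hj => by simpa using hf0 ⟨j, hj, rfl⟩⟩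
  choose f hf1 hf0 using H
  exact ⟨x, f, hx, hf1, fun i j h => hf0 i j h.symm⟩

lemma cp_unbounded [Infinite K] (n : ℕ) {O : Set (Cp K)} (hO : IsOpen O) {f0 : Cp K}
    (hf0 : f0 ∈ O) : ∃ g : Cp K, g ∈ O ∧ (n : ℝ) < ‖Cp.toC g‖ := by
  letI : MetricSpace K := TopologicalSpace.metrizableSpaceMetric K
  have hmem : O ∈ nhds f0 := hO.mem_nhds hf0
  have hnh : (nhds f0 : Filter (Cp K)) =
      Filter.comap (fun f : C(K, ℝ) => (f : K → ℝ))
        (nhds ((Cp.toC f0 : C(K, ℝ)) : K → ℝ)) := nhds_induced _ _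
  rw [hnh] at hmem
  obtain ⟨W, hW, hWO⟩ := hmem
  rw [nhds_pi, Filter.mem_pi'] at hW
  obtain ⟨I, t, ht, hsub⟩ := hW
  obtain ⟨x0, hx0⟩ := Infinite.exists_notMem_finset I
  obtain ⟨b, hb0, hb1, -⟩ :=
    exists_continuous_zero_one_of_isClosed (I.finite_toSet.isClosed) isClosed_singleton
      (by rwa [Set.disjoint_singleton_right, Finset.mem_coe])
  set M : ℝ := (n : ℝ) + 1 + ‖Cp.toC f0‖ with hM
  set g : C(K, ℝ) := Cp.toC f0 + M • b with hg
  have hgO : Cp.ofC g ∈ O := by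
    apply hWO
    apply hsub
    intro y hy
    have hby : b y = 0 := by simpa using hb0 hy
    show g y ∈ t y
    have : g y = Cp.toC f0 y := by simp [hg, hby]
    rw [this]
    exact mem_of_mem_nhds (ht y)
  refine ⟨Cp.ofC g, hgO, ?_⟩
  show (n : ℝ) < ‖g‖
  have hbx0 : b x0 = 1 := by simpa using hb1 rfl
  have h1 : g x0 = Cp.toC f0 x0 + M := by simp [hg, hbx0]
  have h2 : -‖Cp.toC f0‖ ≤ Cp.toC f0 x0 := by
    have := ContinuousMap.norm_coe_le_norm (Cp.toC f0) x0
    rw [Real.norm_eq_abs] at this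
    linarith [neg_abs_le (Cp.toC f0 x0)]
  have h3 : (n : ℝ) + 1 ≤ g x0 := by rw [h1, hM]; linarith
  have h4 : g x0 ≤ ‖g‖ := by
    have := ContinuousMap.norm_coe_le_norm g x0
    rw [Real.norm_eq_abs] at this
    linarith [le_abs_self (g x0)]
  linarith

lemma cw_unbounded [Infinite K] (n : ℕ) {O : Set (Cw K)} (hO : IsOpen O) {f0 : Cw K}
    (hf0 : f0 ∈ O) : ∃ g : Cw K, g ∈ O ∧ (n : ℝ) < ‖Cw.toC g‖ := by
  have hmem : O ∈ nhds f0 := hO.mem_nhds hf0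
  have hnh : (nhds f0 : Filter (Cw K)) =
      Filter.comap (fun (f : C(K, ℝ)) (φ : C(K, ℝ) →L[ℝ] ℝ) => φ f)
        (nhds (fun φ : C(K, ℝ) →L[ℝ] ℝ => φ (Cw.toC f0))) := nhds_induced _ _
  rw [hnh] at hmem
  obtain ⟨W, hW, hWO⟩ := hmem
  rw [nhds_pi, Filter.mem_pi'] at hW
  obtain ⟨I, t, ht, hsub⟩ := hW
  obtain ⟨x, f, hxinj, hfx1, hfx0⟩ := exists_bumps (K := K) (I.card + 1)
  set v : Fin (I.card + 1) → (↥I → ℝ) := fun i φ => (φ : C(K, ℝ) →L[ℝ] ℝ) (f i) with hv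
  have hnli : ¬ LinearIndependent ℝ v := by
    intro hli
    have hle := hli.fintype_card_le_finrank
    rw [Module.finrank_fintype_fun_eq_card] at hle
    simp only [Fintype.card_fin, Fintype.card_coe] at hle
    omega
  obtain ⟨c, hc0, i0, hci0⟩ := Fintype.not_linearIndependent_iff.mp hnli
  set h0 : C(K, ℝ) := ∑ i, c i • f i with hh0
  have hker : ∀ φ : C(K, ℝ) →L[ℝ] ℝ, φ ∈ I → φ h0 = 0 := by
    intro φ hφ
    have hc := congrFun hc0 ⟨φ, hφ⟩
    simp only [Finset.sum_apply, Pi.smul_apply, hv, smul_eq_mul, Pi.zero_apply] at hc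
    rw [hh0, map_sum]
    simpa [smul_eq_mul] using hc
  have hval : h0 (x i0) = c i0 := by
    rw [hh0]
    have hsum : (∑ i, c i • f i : C(K, ℝ)) (x i0) = ∑ i, c i * f i (x i0) := by
      simp
    rw [hsum, Finset.sum_eq_single i0]
    · rw [hfx1 i0]; ring
    · intro i _ hi
      rw [hfx0 i i0 hi]; ring
    · intro hmm; exact absurd (Finset.mem_univ i0) hmm
  set a : ℝ := ((n : ℝ) + 1 + ‖Cw.toC f0‖) / c i0 with ha
  set g : C(K, ℝ) := Cw.toC f0 + a • h0 with hg
  have hgO : Cw.ofC g ∈ O := by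
    apply hWO
    apply hsub
    intro φ hφ
    show φ g ∈ t φ
    have : φ g = φ (Cw.toC f0) := by
      rw [hg, map_add, map_smul, hker φ hφ]
      simp
    rw [this]
    exact mem_of_mem_nhds (ht φ)
  refine ⟨Cw.ofC g, hgO, ?_⟩
  show (n : ℝ) < ‖g‖
  have h1 : g (x i0) = Cw.toC f0 (x i0) + ((n : ℝ) + 1 + ‖Cw.toC f0‖) := by
    have hac : a * c i0 = (n : ℝ) + 1 + ‖Cw.toC f0‖ := div_mul_cancel₀ _ hci0
    simp [hg, hval, smul_eq_mul, hac]
  have h2 : -‖Cw.toC f0‖ ≤ Cw.toC f0 (x i0) := by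
    have := ContinuousMap.norm_coe_le_norm (Cw.toC f0) (x i0)
    rw [Real.norm_eq_abs] at this
    linarith [neg_abs_le (Cw.toC f0 (x i0))]
  have h3 : (n : ℝ) + 1 ≤ g (x i0) := by rw [h1]; linarith
  have h4 : g (x i0) ≤ ‖g‖ := by
    have := ContinuousMap.norm_coe_le_norm g (x i0)
    rw [Real.norm_eq_abs] at this
    linarith [le_abs_self (g (x i0))]
  linarith

end Aux

set_option synthInstance.maxHeartbeats 1000000

/-- For uncountable compact metrizable `K`, the sup-norm topology on `C(K)` (the default
topology on `C(K, ℝ)` for compact `K`) is homeomorphic neither to the weak nor to the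
pointwise topology. -/
theorem stmt1 (K : Type*) [TopologicalSpace K] [CompactSpace K] [MetrizableSpace K]
    (hK : ¬ Countable K) :
    ¬ Nonempty (C(K, ℝ) ≃ₜ Cw K) ∧ ¬ Nonempty (C(K, ℝ) ≃ₜ Cp K) := by
  haveI : Infinite K := by
    rw [← not_finite_iff_infinite]
    intro h
    exact hK inferInstance
  constructor
  · rintro ⟨h⟩
    set A : ℕ → Set (Cw K) :=
      fun n => {f : Cw K | ∀ φ : C(K, ℝ) →L[ℝ] ℝ, |φ (Cw.toC f)| ≤ (n : ℝ) * ‖φ‖} with hA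
    have hclosed : ∀ n, IsClosed (A n) := by
      intro n
      have heq : A n = ⋂ φ : C(K, ℝ) →L[ℝ] ℝ,
          {f : Cw K | |φ (Cw.toC f)| ≤ (n : ℝ) * ‖φ‖} := by
        ext f; simp [hA]
      rw [heq]
      refine isClosed_iInter fun φ => ?_
      have hj : Continuous (fun (f : Cw K) (ψ : C(K, ℝ) →L[ℝ] ℝ) => ψ (Cw.toC f)) :=
        continuous_induced_dom
      have hev : Continuous fun f : Cw K => φ (Cw.toC f) := (continuous_apply φ).comp hj
      exact isClosed_le hev.abs continuous_const
    have hcover : ⋃ n, h ⁻¹' (A n) = Set.univ := by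
      ext f
      simp only [Set.mem_iUnion, Set.mem_preimage, Set.mem_univ, iff_true]
      obtain ⟨n, hn⟩ := exists_nat_ge ‖Cw.toC (h f)‖
      refine ⟨n, fun φ => ?_⟩
      have h1 := φ.le_opNorm (Cw.toC (h f))
      rw [Real.norm_eq_abs] at h1
      have h2 : ‖φ‖ * ‖Cw.toC (h f)‖ ≤ (n : ℝ) * ‖φ‖ := by
        rw [mul_comm]
        exact mul_le_mul_of_nonneg_right hn (norm_nonneg φ)
      linarith
    obtain ⟨n, hne⟩ := nonempty_interior_of_iUnion_of_closed
      (fun n => (hclosed n).preimage h.continuous) hcover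
    obtain ⟨f1, hf1⟩ := hne
    have hOopen : IsOpen (h '' interior (h ⁻¹' A n)) := h.isOpenMap _ isOpen_interior
    have hmem : h f1 ∈ h '' interior (h ⁻¹' A n) := Set.mem_image_of_mem _ hf1
    obtain ⟨g, hgO, hgn⟩ := cw_unbounded n hOopen hmem
    have hgA : g ∈ A n := by
      obtain ⟨u, hu, hug⟩ := hgO
      rw [← hug]
      exact Set.mem_preimage.mp (interior_subset hu)
    have hle : ‖Cw.toC g‖ ≤ (n : ℝ) :=
      NormedSpace.norm_le_dual_bound ℝ _ (by positivity) fun φ => by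
        rw [Real.norm_eq_abs]; exact hgA φ
    linarith
  · rintro ⟨h⟩
    set A : ℕ → Set (Cp K) :=
      fun n => {f : Cp K | ∀ x : K, |Cp.toC f x| ≤ (n : ℝ)} with hA
    have hclosed : ∀ n, IsClosed (A n) := by
      intro n
      have heq : A n = ⋂ x : K, {f : Cp K | |Cp.toC f x| ≤ (n : ℝ)} := by
        ext f; simp [hA]
      rw [heq]
      refine isClosed_iInter fun x => ?_
      have hj : Continuous (fun (f : Cp K) (y : K) => Cp.toC f y) :=
        continuous_induced_dom
      have hev : Continuous fun f : Cp K => Cp.toC f x := (continuous_apply x).comp hj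
      exact isClosed_le hev.abs continuous_const
    have hcover : ⋃ n, h ⁻¹' (A n) = Set.univ := by
      ext f
      simp only [Set.mem_iUnion, Set.mem_preimage, Set.mem_univ, iff_true]
      obtain ⟨n, hn⟩ := exists_nat_ge ‖Cp.toC (h f)‖
      refine ⟨n, fun x => ?_⟩
      have h1 := ContinuousMap.norm_coe_le_norm (Cp.toC (h f)) x
      rw [Real.norm_eq_abs] at h1
      linarith
    obtain ⟨n, hne⟩ := nonempty_interior_of_iUnion_of_closed
      (fun n => (hclosed n).preimage h.continuous) hcover
    obtain ⟨f1, hf1⟩ := hne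
    have hOopen : IsOpen (h '' interior (h ⁻¹' A n)) := h.isOpenMap _ isOpen_interior
    have hmem : h f1 ∈ h '' interior (h ⁻¹' A n) := Set.mem_image_of_mem _ hf1
    obtain ⟨g, hgO, hgn⟩ := cp_unbounded n hOopen hmem
    have hgA : g ∈ A n := by
      obtain ⟨u, hu, hug⟩ := hgO
      rw [← hug]
      exact Set.mem_preimage.mp (interior_subset hu)
    have hle : ‖Cp.toC g‖ ≤ (n : ℝ) := by
      refine (ContinuousMap.norm_le _ (by positivity)).mpr fun x => ?_
      rw [Real.norm_eq_abs]; exact hgA x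
    linarith
end
end

section
/- Let K and L be compact spaces and Φ : C_p(K) → C_w(L) a homeomorphism taking the zero function to the zero function. For k, m, n ∈ ℕ define Z_{k,m,n} = { (E, y) ∈ [K]^{≤k} × L : Φ(O_K(E; 1/m)) ⊆ ̅W_L(δ_y; 1/n) }. Then Z_{k,m,n} is closed in [K]^{≤k} × L. -/
open Set TopologicalSpace

noncomputable section

/-- The Vietoris topology on the family of subsets of `K`. -/
def vietorisTopology (K : Type*) [TopologicalSpace K] : TopologicalSpace (Set K) :=
  TopologicalSpace.generateFrom
    ({S | ∃ U : Set K, IsOpen U ∧ S = {F : Set K | F ⊆ U}} ∪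
     {S | ∃ U : Set K, IsOpen U ∧ S = {F : Set K | (F ∩ U).Nonempty}})

/-- `[K]^{≤ k}`: the hyperspace of nonempty at most `k`-element subsets of `K`,
with the Vietoris topology. -/
def FinHyper (K : Type*) [TopologicalSpace K] (k : ℕ) : Type _ :=
  {F : Set K // F.Nonempty ∧ F.Finite ∧ F.ncard ≤ k}

instance (K : Type*) [TopologicalSpace K] (k : ℕ) : TopologicalSpace (FinHyper K k) :=
  TopologicalSpace.induced Subtype.val (vietorisTopology K)

/-- The basic pointwise neighborhood `O_K(E; ε) = {f : |f(x)| < ε for all x ∈ E}` of `0` in `Cp K`. -/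
def OK (K : Type*) [TopologicalSpace K] (E : Set K) (ε : ℝ) : Set (Cp K) :=
  {f | ∀ x ∈ E, |Cp.toFun f x| < ε}

/-- `W̄_L(δ_y; ε) = {f : |f(y)| ≤ ε}`, a closed weak neighborhood of `0` in `Cw L`. -/
def WbarL (L : Type*) [TopologicalSpace L] [CompactSpace L] (y : L) (ε : ℝ) : Set (Cw L) :=
  {f | |Cw.toFun f y| ≤ ε}

/-- The set `Z_{k,m,n} = {(E, y) : Φ(O_K(E; 1/m)) ⊆ W̄_L(δ_y; 1/n)}` is closed in
`[K]^{≤k} × L`. -/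
theorem stmt3 (K L : Type*) [TopologicalSpace K] [CompactSpace K]
    [TopologicalSpace L] [CompactSpace L]
    (Φ : Cp K ≃ₜ Cw L) (hΦ : Φ 0 = 0) (k m n : ℕ) (hm : 0 < m) (hn : 0 < n) :
    IsClosed {p : FinHyper K k × L |
      Φ '' OK K p.1.val (1 / (m : ℝ)) ⊆ WbarL L p.2 (1 / (n : ℝ))} := by
  rw [← isOpen_compl_iff, isOpen_iff_mem_nhds]
  rintro ⟨E, y⟩ hp
  simp only [mem_compl_iff, mem_setOf_eq, not_subset] at hp
  obtain ⟨g, hg, hgW⟩ := hp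
  obtain ⟨f, hf, rfl⟩ := hg
  have hgy : 1 / (n : ℝ) < |Cw.toFun (Φ f) y| := by
    simpa [WbarL, not_le] using hgW
  set U : Set K := {x | |Cp.toFun f x| < 1 / (m : ℝ)} with hU
  have hUopen : IsOpen U :=
    isOpen_lt (continuous_abs.comp (f : C(K, ℝ)).continuous) continuous_const
  have hviet : @IsOpen (Set K) (vietorisTopology K) {F | F ⊆ U} :=
    TopologicalSpace.GenerateOpen.basic _ (Or.inl ⟨U, hUopen, rfl⟩)
  have hVopen : IsOpen {E' : FinHyper K k | E'.val ⊆ U} := ⟨_, hviet, rfl⟩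
  have hWopen : IsOpen {y' : L | 1 / (n : ℝ) < |Cw.toFun (Φ f) y'|} :=
    isOpen_lt continuous_const (continuous_abs.comp (Φ f : C(L, ℝ)).continuous)
  refine Filter.mem_of_superset
    ((hVopen.prod hWopen).mem_nhds ⟨fun x hx => hf x hx, hgy⟩) ?_
  rintro ⟨E', y'⟩ ⟨hE', hy'⟩
  simp only [mem_compl_iff, mem_setOf_eq, not_subset]
  refine ⟨Φ f, ⟨f, fun x hx => hE' hx, rfl⟩, ?_⟩
  simpa [WbarL, not_le] using hy'
end
end

section
/- Let K and L be compact spaces and Φ : C_p(K) → C_w(L) a homeomorphism taking the zero function to the zero function. With C(k,m,n) denoting the projection onto L of the set Z_{k,m,n} = { (E,y) ∈ [K]^{≤k} × L : Φ(O_K(E;1/m)) ⊆ ̅W_L(δ_y;1/n) }, one has L = ⋃_{k,m ∈ ℕ} C(k,m,n) for every fixed n ∈ ℕ. -/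
open Set TopologicalSpace

noncomputable section

/-! Evaluation at `y` is weakly continuous, so `Φ⁻¹{g : |g(y)| < 1/n}` is a neighbourhood of `0`
in `C_p(K)` and therefore contains a basic set `O_K(E; ε)` with `E` finite; shrink `ε` to some
`1/m` and, if needed, enlarge `E` to make it nonempty (`K ≠ ∅` because `C(L) ≠ {0}`). -/

open Filter Topology

theorem OK_anti {K : Type*} [TopologicalSpace K] {E E' : Set K} {ε ε' : ℝ} (hE : E ⊆ E')
    (hε : ε ≤ ε') : OK K E' ε ⊆ OK K E ε' :=
  fun _ hf x hx => (hf x (hE hx)).trans_le hε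

theorem Cp.exists_OK_subset_of_mem_nhds {K : Type*} [TopologicalSpace K] {V : Set (Cp K)}
    (hV : V ∈ 𝓝 (0 : Cp K)) : ∃ E : Set K, E.Finite ∧ ∃ ε > 0, OK K E ε ⊆ V := by
  rw [nhds_induced, Filter.mem_comap] at hV
  obtain ⟨t, ht, htV⟩ := hV
  rw [nhds_pi, Filter.mem_pi] at ht
  obtain ⟨I, hI, s, hs, hIt⟩ := ht
  have hball : ∀ᶠ ε in 𝓝[>] (0 : ℝ), ∀ x ∈ I, Metric.ball 0 ε ⊆ s x := by
    refine hI.eventually_all.2 fun x _ => ?_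
    obtain ⟨r, hr, hrs⟩ := Metric.mem_nhds_iff.1 (hs x)
    filter_upwards [Ioc_mem_nhdsGT hr] with ε hε
    exact (Metric.ball_subset_ball hε.2).trans hrs
  obtain ⟨ε, hεI, hε⟩ := (hball.and self_mem_nhdsWithin).exists
  refine ⟨I, hI, ε, hε, fun f hf => htV (hIt fun x hx => hεI x hx ?_)⟩
  rw [Metric.mem_ball, Real.dist_eq, sub_zero]
  exact hf x hx

theorem Cw.continuous_toFun_apply {L : Type*} [TopologicalSpace L] [CompactSpace L] (y : L) :
    Continuous fun g : Cw L => Cw.toFun g y :=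
  (continuous_apply (ContinuousMap.evalCLM ℝ y)).comp
    (continuous_induced_dom : Continuous fun (g : Cw L) (φ : C(L, ℝ) →L[ℝ] ℝ) => φ g)

theorem Cp.nonempty_of_equiv_Cw {K L : Type*} [TopologicalSpace K] [TopologicalSpace L]
    [CompactSpace L] [Nonempty L] (e : Cp K ≃ Cw L) : Nonempty K := by
  by_contra hK
  rw [not_nonempty_iff] at hK
  have : Subsingleton C(L, ℝ) := e.subsingleton_congr.1 ⟨fun f g => ContinuousMap.ext hK.elim⟩
  exact false_of_nontrivial_of_subsingleton C(L, ℝ)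

theorem stmt4_general (K L : Type*) [TopologicalSpace K]
    [TopologicalSpace L] [CompactSpace L]
    (Φ : Cp K ≃ₜ Cw L) (hΦ : Φ 0 = 0) (n : ℕ) (hn : 0 < n) (y : L) :
    ∃ k m : ℕ, 0 < k ∧ 0 < m ∧ ∃ E : Set K, E.Nonempty ∧ E.Finite ∧ E.ncard ≤ k ∧
      Φ '' OK K E (1 / (m : ℝ)) ⊆ WbarL L y (1 / (n : ℝ)) := by
  have : Nonempty L := ⟨y⟩
  obtain ⟨x₀⟩ := Cp.nonempty_of_equiv_Cw Φ.toEquiv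
  have hU : Φ ⁻¹' {g | |Cw.toFun g y| < 1 / n} ∈ 𝓝 (0 : Cp K) := by
    refine ((isOpen_lt (continuous_abs.comp (Cw.continuous_toFun_apply y))
      continuous_const).preimage Φ.continuous).mem_nhds ?_
    rw [mem_preimage, hΦ]
    show |(0 : ℝ)| < 1 / (n : ℝ)
    simpa using hn
  obtain ⟨E, hE, ε, hε, hEU⟩ := Cp.exists_OK_subset_of_mem_nhds hU
  obtain ⟨m, hm⟩ := exists_nat_one_div_lt hε
  refine ⟨(insert x₀ E).ncard, m + 1, (insert_nonempty _ _).ncard_pos (hE.insert x₀),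
    m.succ_pos, insert x₀ E, insert_nonempty _ _, hE.insert x₀, le_rfl, ?_⟩
  rintro _ ⟨f, hf, rfl⟩
  have hfU : |Cw.toFun (Φ f) y| < 1 / n :=
    hEU (OK_anti (subset_insert _ _) (by exact_mod_cast hm.le) hf)
  exact hfU.le

/-- `L = ⋃_{k,m} C(k,m,n)`: every `y ∈ L` belongs to some `C(k,m,n)`, i.e. admits a
nonempty finite set `E ⊆ K` of cardinality at most `k` with
`Φ(O_K(E; 1/m)) ⊆ W̄_L(δ_y; 1/n)`. -/
theorem stmt4 (K L : Type*) [TopologicalSpace K] [CompactSpace K]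
    [TopologicalSpace L] [CompactSpace L]
    (Φ : Cp K ≃ₜ Cw L) (hΦ : Φ 0 = 0) (n : ℕ) (hn : 0 < n) (y : L) :
    ∃ k m : ℕ, 0 < k ∧ 0 < m ∧ ∃ E : Set K, E.Nonempty ∧ E.Finite ∧ E.ncard ≤ k ∧
      Φ '' OK K E (1 / (m : ℝ)) ⊆ WbarL L y (1 / (n : ℝ)) :=
  stmt4_general K L Φ hΦ n hn y
end
end

section
/- Let K, L be compact spaces, Φ : C_p(K) → C_w(L) a homeomorphism fixing the zero function. Suppose y ∈ L, m ∈ ℕ, and A ⊆ K is a finite set with Φ(O_K(A; 1/m)) ⊆ ̅W_L(δ_y; 1). For each x ∈ A let F_x ⊆ M(L) be a finite set of measures and n_x ∈ ℕ with Φ^{-1}(W_L(F_x; 1/n_x)) ⊆ O_K(x; 1/m). Then δ_y lies in the linear span of ⋃_{x ∈ A} F_x inside M(L). -/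
open Set TopologicalSpace

noncomputable section

/-- The Dirac measure at `y`, as an element of `M(L) = C(L)*` with the weak* topology. -/
def dirac (L : Type*) [TopologicalSpace L] [CompactSpace L] (y : L) :
    WeakDual ℝ C(L, ℝ) :=
  ContinuousMap.evalCLM ℝ y

/-- The basic weak neighborhood `W_L(F; ε) = {f : |μ(f)| < ε for all μ ∈ F}` of `0` in `Cw L`. -/
def WL (L : Type*) [TopologicalSpace L] [CompactSpace L]
    (F : Set (WeakDual ℝ C(L, ℝ))) (ε : ℝ) : Set (Cw L) :=
  {f | ∀ μ ∈ F, |μ (show C(L, ℝ) from f)| < ε}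

/-!
If `f ∈ C(L)` is annihilated by every measure in `⋃ F_x`, then so is every multiple `t f`, hence
`Φ⁻¹(t f) ∈ O_K(A; 1/m)` and `|t f(y)| ≤ 1` for all `t ∈ ℝ`, forcing `f(y) = 0`. Thus `δ_y` vanishes
on the common kernel of the finitely many functionals in `⋃ F_x`, so it lies in their span.
-/

theorem WeakDual.mem_span_of_forall_eq_zero {𝕜 E : Type*} [Field 𝕜] [TopologicalSpace 𝕜]
    [IsTopologicalRing 𝕜] [AddCommGroup E] [Module 𝕜 E] [TopologicalSpace E]
    {G : Set (WeakDual 𝕜 E)} (hG : G.Finite) {φ : WeakDual 𝕜 E}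
    (h : ∀ x, (∀ μ ∈ G, μ x = 0) → φ x = 0) : φ ∈ Submodule.span 𝕜 G := by
  have : Finite G := hG
  let c : WeakDual 𝕜 E →ₗ[𝕜] E →ₗ[𝕜] 𝕜 := ContinuousLinearMap.coeLM 𝕜
  have hker : ⨅ μ : G, LinearMap.ker (c μ) ≤ LinearMap.ker (c φ) := fun x hx ↦ by
    simp only [Submodule.mem_iInf, LinearMap.mem_ker] at hx
    exact h x fun μ hμ ↦ hx ⟨μ, hμ⟩
  have hspan := mem_span_of_iInf_ker_le_ker hker
  rwa [← image_eq_range (fun μ ↦ c μ) G,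
    Submodule.apply_mem_span_image_iff_mem_span ContinuousLinearMap.coe_injective] at hspan

theorem eq_zero_of_forall_abs_mul_le {a r : ℝ} (h : ∀ t : ℝ, |t * a| ≤ r) : a = 0 := by
  by_contra ha
  have := h ((|r| + 1) / a)
  rw [div_mul_cancel₀ _ ha, abs_of_pos (by positivity)] at this
  linarith [le_abs_self r]

theorem mem_WL_of_forall_eq_zero {L : Type*} [TopologicalSpace L] [CompactSpace L]
    {F : Set (WeakDual ℝ C(L, ℝ))} {f : Cw L} (hf : ∀ μ ∈ F, μ (show C(L, ℝ) from f) = 0)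
    {δ : ℝ} (hδ : 0 < δ) : f ∈ WL L F δ := fun μ hμ ↦ by
  rwa [hf μ hμ, abs_zero]

theorem apply_eq_zero_of_forall_map_eq_zero {K L : Type*} [TopologicalSpace K]
    [TopologicalSpace L] [CompactSpace L] (Φ : Cp K ≃ Cw L) {A : Set K} {y : L} {ε r : ℝ}
    (hAy : Φ '' OK K A ε ⊆ WbarL L y r) {F : K → Set (WeakDual ℝ C(L, ℝ))} {δ : K → ℝ}
    (hF : ∀ x ∈ A, 0 < δ x ∧ Φ ⁻¹' WL L (F x) (δ x) ⊆ OK K {x} ε)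
    {f : C(L, ℝ)} (hf : ∀ μ ∈ ⋃ x ∈ A, F x, μ f = 0) : f y = 0 := by
  refine eq_zero_of_forall_abs_mul_le (r := r) fun t ↦ ?_
  have hWL : ∀ x ∈ A, (show Cw L from t • f) ∈ WL L (F x) (δ x) := fun x hx ↦
    mem_WL_of_forall_eq_zero (fun μ hμ ↦ by
      rw [show μ (show C(L, ℝ) from (show Cw L from t • f)) = t * μ f from map_smul μ t f,
        hf μ (mem_biUnion hx hμ), mul_zero]) (hF x hx).1
  have hOK : Φ.symm (show Cw L from t • f) ∈ OK K A ε := fun x hx ↦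
    (hF x hx).2 (by rw [mem_preimage, Φ.apply_symm_apply]; exact hWL x hx) x rfl
  exact hAy ⟨_, hOK, Φ.apply_symm_apply _⟩

theorem stmt7_general (K L : Type*) [TopologicalSpace K] [CompactSpace K]
    [TopologicalSpace L] [CompactSpace L]
    (Φ : Cp K ≃ₜ Cw L) (y : L) (m : ℕ)
    (A : Set K) (hA : A.Finite)
    (hAy : Φ '' OK K A (1 / (m : ℝ)) ⊆ WbarL L y 1)
    (F : K → Set (WeakDual ℝ C(L, ℝ))) (n : K → ℕ)
    (hF : ∀ x ∈ A, (F x).Finite ∧ 0 < n x ∧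
      Φ ⁻¹' (WL L (F x) (1 / (n x : ℝ))) ⊆ OK K {x} (1 / (m : ℝ))) :
    dirac L y ∈ Submodule.span ℝ (⋃ x ∈ A, F x) := by
  refine WeakDual.mem_span_of_forall_eq_zero (hA.biUnion fun x hx ↦ (hF x hx).1) fun f hf ↦ ?_
  refine apply_eq_zero_of_forall_map_eq_zero Φ.toEquiv hAy (δ := fun x ↦ 1 / (n x : ℝ))
    (fun x hx ↦ ⟨?_, (hF x hx).2.2⟩) hf
  have := (hF x hx).2.1
  positivity

/-- Key Lemma: if `Φ(O_K(A; 1/m)) ⊆ W̄_L(δ_y; 1)` and for each `x ∈ A` a finite set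
`F x ⊆ M(L)` satisfies `Φ⁻¹(W_L(F x; 1/n x)) ⊆ O_K(x; 1/m)`, then `δ_y` lies in the
linear span of `⋃_{x ∈ A} F x` in `M(L)`. -/
theorem stmt7 (K L : Type*) [TopologicalSpace K] [CompactSpace K]
    [TopologicalSpace L] [CompactSpace L]
    (Φ : Cp K ≃ₜ Cw L) (hΦ : Φ 0 = 0) (y : L) (m : ℕ) (hm : 0 < m)
    (A : Set K) (hA : A.Finite)
    (hAy : Φ '' OK K A (1 / (m : ℝ)) ⊆ WbarL L y 1)
    (F : K → Set (WeakDual ℝ C(L, ℝ))) (n : K → ℕ)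
    (hF : ∀ x ∈ A, (F x).Finite ∧ 0 < n x ∧
      Φ ⁻¹' (WL L (F x) (1 / (n x : ℝ))) ⊆ OK K {x} (1 / (m : ℝ))) :
    dirac L y ∈ Submodule.span ℝ (⋃ x ∈ A, F x) :=
  stmt7_general K L Φ y m A hA hAy F n hF
end
end

section
/- A strongly infinite-dimensional normal space is not a C-space. -/
open Set TopologicalSpace

/-- `L` is a partition between `A` and `B` in `X`. -/
def IsPartitionBetween (X : Type*) [TopologicalSpace X] (L A B : Set X) : Prop :=
  IsClosed L ∧ ∃ U V : Set X, IsOpen U ∧ IsOpen V ∧ A ⊆ U ∧ B ⊆ V ∧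
    Disjoint U V ∧ Lᶜ = U ∪ V

/-- `{(A i, B i)}` is an essential family of pairs of disjoint closed sets:
any choice of partitions between the pairs has nonempty intersection. -/
def EssentialFamily (X : Type*) [TopologicalSpace X] (A B : ℕ → Set X) : Prop :=
  (∀ i, IsClosed (A i) ∧ IsClosed (B i) ∧ Disjoint (A i) (B i)) ∧
  ∀ L : ℕ → Set X, (∀ i, IsPartitionBetween X (L i) (A i) (B i)) → (⋂ i, L i).Nonempty

/-- A space is strongly infinite-dimensional if it has an infinite essential family. -/
def StronglyInfiniteDimensional (X : Type*) [TopologicalSpace X] : Prop :=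
  ∃ A B : ℕ → Set X, EssentialFamily X A B

/-- A space is a C-space: for every sequence of open covers `U i` there are families
`V i` of pairwise disjoint open sets, `V i` refining `U i`, with `⋃ i, V i` a cover. -/
def IsCSpace (X : Type*) [TopologicalSpace X] : Prop :=
  ∀ U : ℕ → Set (Set X),
    (∀ i, (∀ u ∈ U i, IsOpen u) ∧ ⋃₀ U i = univ) →
    ∃ V : ℕ → Set (Set X),
      (∀ i, (∀ v ∈ V i, IsOpen v) ∧ (V i).PairwiseDisjoint id ∧
        ∀ v ∈ V i, ∃ u ∈ U i, v ⊆ u) ∧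
      ⋃₀ (⋃ i, V i) = univ

/-- A strongly infinite-dimensional normal space is not a C-space. -/
theorem stmt9 (X : Type*) [TopologicalSpace X] [NormalSpace X]
    (h : StronglyInfiniteDimensional X) : ¬ IsCSpace X := by
  rintro hC
  obtain ⟨A, B, hcl, hEss⟩ := h
  have hf : ∀ i, ∃ f : C(X, ℝ), Set.EqOn f 0 (A i) ∧ Set.EqOn f 1 (B i) ∧
      ∀ x, f x ∈ Set.Icc (0:ℝ) 1 :=
    fun i => exists_continuous_zero_one_of_isClosed (hcl i).1 (hcl i).2.1 (hcl i).2.2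
  choose f hf0 hf1 hfI using hf
  set U : ℕ → Set (Set X) :=
    fun i => {{x | f i x < 2/3}, {x | 1/3 < f i x}} with hUdef
  have hUcov : ∀ i, (∀ u ∈ U i, IsOpen u) ∧ ⋃₀ U i = univ := by
    intro i
    constructor
    · rintro u (rfl | rfl)
      · exact isOpen_lt (f i).continuous continuous_const
      · exact isOpen_lt continuous_const (f i).continuous
    · ext x
      simp only [mem_sUnion, mem_univ, iff_true]
      rcases lt_or_ge (f i x) (2/3) with h' | h'
      · exact ⟨_, Set.mem_insert _ _, h'⟩
      · refine ⟨_, Set.mem_insert_of_mem _ rfl, ?_⟩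
        show (1:ℝ)/3 < f i x
        linarith
  obtain ⟨V, hV, hVcov⟩ := hC U hUcov
  set F : ℕ → Set X := fun i => ⋃₀ {v ∈ V i | v ⊆ {x | f i x < 2/3}} with hFdef
  set E : ℕ → Set X := fun i => ⋃₀ {v ∈ V i | ¬ v ⊆ {x | f i x < 2/3}} with hEdef
  have hEsub : ∀ i, E i ⊆ {x | 1/3 < f i x} := by
    intro i x hx
    obtain ⟨v, ⟨hvV, hv2⟩, hxv⟩ := hx
    obtain ⟨u, hu, hvu⟩ := (hV i).2.2 v hvV
    rcases hu with rfl | rfl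
    · exact absurd hvu hv2
    · exact hvu hxv
  have hFsub : ∀ i, F i ⊆ {x | f i x < 2/3} := by
    intro i x hx
    obtain ⟨v, ⟨hvV, hv2⟩, hxv⟩ := hx
    exact hv2 hxv
  have hFopen : ∀ i, IsOpen (F i) :=
    fun i => isOpen_sUnion fun v hv => (hV i).1 v hv.1
  have hEopen : ∀ i, IsOpen (E i) :=
    fun i => isOpen_sUnion fun v hv => (hV i).1 v hv.1
  have hEF : ∀ i, Disjoint (F i) (E i) := by
    intro i
    rw [Set.disjoint_sUnion_left]
    intro v hv
    rw [Set.disjoint_sUnion_right]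
    intro w hw
    exact (hV i).2.1 hv.1 hw.1 (fun hvw => hw.2 (hvw ▸ hv.2))
  set U' : ℕ → Set X := fun i => {x | f i x < 1/3} ∪ F i with hU'def
  set V' : ℕ → Set X := fun i => {x | 2/3 < f i x} ∪ E i with hV'def
  set L : ℕ → Set X := fun i => (U' i ∪ V' i)ᶜ with hLdef
  have hpart : ∀ i, IsPartitionBetween X (L i) (A i) (B i) := by
    intro i
    have hU'open : IsOpen (U' i) :=
      ((isOpen_lt (f i).continuous continuous_const).union (hFopen i))
    have hV'open : IsOpen (V' i) :=
      ((isOpen_lt continuous_const (f i).continuous).union (hEopen i))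
    refine ⟨(hU'open.union hV'open).isClosed_compl,
      U' i, V' i, hU'open, hV'open, ?_, ?_, ?_, compl_compl _⟩
    · intro x hx
      left
      show f i x < 1/3
      rw [hf0 i hx]
      norm_num
    · intro x hx
      left
      show (2:ℝ)/3 < f i x
      rw [hf1 i hx]
      norm_num
    · rw [Set.disjoint_union_left]
      constructor
      · rw [Set.disjoint_union_right]
        refine ⟨?_, ?_⟩
        · rw [Set.disjoint_left]
          intro x hx hx'
          have h1 : f i x < 1/3 := hx
          have h2 : (2:ℝ)/3 < f i x := hx'
          linarith
        · refine Set.disjoint_left.2 fun x hx hx' => ?_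
          have h1 : f i x < 1/3 := hx
          have h2 : (1:ℝ)/3 < f i x := hEsub i hx'
          linarith
      · rw [Set.disjoint_union_right]
        refine ⟨?_, hEF i⟩
        refine Set.disjoint_left.2 fun x hx hx' => ?_
        have h1 : f i x < 2/3 := hFsub i hx
        have h2 : (2:ℝ)/3 < f i x := hx'
        linarith
  obtain ⟨x, hx⟩ := hEss L hpart
  have hxU : x ∈ ⋃₀ (⋃ i, V i) := by rw [hVcov]; trivial
  obtain ⟨v, hv, hxv⟩ := hxU
  obtain ⟨i, hvV⟩ := Set.mem_iUnion.1 hv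
  have hxL : x ∈ L i := Set.mem_iInter.1 hx i
  apply hxL
  by_cases h2 : v ⊆ {x | f i x < 2/3}
  · exact Or.inl (Or.inr ⟨v, ⟨hvV, h2⟩, hxv⟩)
  · exact Or.inr (Or.inr ⟨v, ⟨hvV, h2⟩, hxv⟩)
end

section
/- Let Z be a strongly infinite-dimensional compact metrizable space and Y ⊆ Z a G_δ subset. Then either Y contains a strongly infinite-dimensional compactum, or Z \ Y contains a strongly infinite-dimensional compactum. -/
open Set TopologicalSpace

section Aux

variable {Z : Type*} [TopologicalSpace Z] [MetrizableSpace Z]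

/-- Separated sets in a metrizable space can be separated by disjoint open sets. -/
lemma sepNhds {S T : Set Z} (h1 : ∀ x ∈ closure S, x ∉ T) (h2 : ∀ x ∈ S, x ∉ closure T) :
    ∃ U V : Set Z, IsOpen U ∧ IsOpen V ∧ S ⊆ U ∧ T ⊆ V ∧ Disjoint U V := by
  letI := metrizableSpaceMetric Z
  rcases S.eq_empty_or_nonempty with rfl | hS
  · exact ⟨∅, univ, isOpen_empty, isOpen_univ, by simp, by simp, by simp⟩
  rcases T.eq_empty_or_nonempty with rfl | hT
  · exact ⟨univ, ∅, isOpen_univ, isOpen_empty, by simp, by simp, by simp⟩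
  refine ⟨{x | Metric.infDist x S < Metric.infDist x T},
    {x | Metric.infDist x T < Metric.infDist x S}, ?_, ?_, ?_, ?_, ?_⟩
  · exact isOpen_lt (Metric.continuous_infDist_pt S) (Metric.continuous_infDist_pt T)
  · exact isOpen_lt (Metric.continuous_infDist_pt T) (Metric.continuous_infDist_pt S)
  · intro x hx
    have h0 : Metric.infDist x S = 0 := Metric.infDist_zero_of_mem hx
    have hne : Metric.infDist x T ≠ 0 := fun h =>
      h2 x hx ((Metric.mem_closure_iff_infDist_zero hT).2 h)
    simpa [h0] using lt_of_le_of_ne Metric.infDist_nonneg (Ne.symm hne)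
  · intro x hx
    have h0 : Metric.infDist x T = 0 := Metric.infDist_zero_of_mem hx
    have hne : Metric.infDist x S ≠ 0 := fun h =>
      h1 x ((Metric.mem_closure_iff_infDist_zero hS).2 h) hx
    simpa [h0] using lt_of_le_of_ne Metric.infDist_nonneg (Ne.symm hne)
  · rw [Set.disjoint_left]
    intro x hx1 hx2
    simp only [mem_setOf_eq] at hx1 hx2
    exact lt_asymm hx1 hx2

/-- Extension of partitions: a partition (in relative form) between `A ∩ M` and `B ∩ M`
inside a closed set `M` extends to a partition between `A` and `B` in `Z` whose trace
on `M` is contained in the given one. -/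
lemma extend_partition {M A B L'' : Set Z} {OU OV : Set Z}
    (hM : IsClosed M) (hA : IsClosed A) (hB : IsClosed B) (hAB : Disjoint A B)
    (hOU : IsOpen OU) (hOV : IsOpen OV)
    (hAU : A ∩ M ⊆ OU ∩ M) (hBV : B ∩ M ⊆ OV ∩ M)
    (hUV : Disjoint (OU ∩ M) (OV ∩ M)) (hpart : M \ L'' = (OU ∩ M) ∪ (OV ∩ M))
    (hLM : L'' ⊆ M) :
    ∃ L : Set Z, IsPartitionBetween Z L A B ∧ L ∩ M ⊆ L'' := by
  have hU0sub : OU ∩ M ⊆ M \ L'' := hpart ▸ subset_union_left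
  have hV0sub : OV ∩ M ⊆ M \ L'' := hpart ▸ subset_union_right
  have keyUV : ∀ x, x ∈ OU ∩ M → x ∉ closure (OV ∩ M) := by
    intro x hx hxc
    obtain ⟨y, hyU, hyV⟩ := (mem_closure_iff.1 hxc) OU hOU hx.1
    exact Set.disjoint_left.1 hUV ⟨hyU, hyV.2⟩ hyV
  have keyVU : ∀ x, x ∈ OV ∩ M → x ∉ closure (OU ∩ M) := by
    intro x hx hxc
    obtain ⟨y, hyV, hyU⟩ := (mem_closure_iff.1 hxc) OV hOV hx.1
    exact Set.disjoint_left.1 hUV hyU ⟨hyV, hyU.2⟩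
  have hclU_M : closure (OU ∩ M) ⊆ M := closure_minimal inter_subset_right hM
  have hclV_M : closure (OV ∩ M) ⊆ M := closure_minimal inter_subset_right hM
  set C : Set Z := A ∪ closure (OU ∩ M) with hCdef
  set D : Set Z := B ∪ closure (OV ∩ M) with hDdef
  have hC : IsClosed C := hA.union isClosed_closure
  have hD : IsClosed D := hB.union isClosed_closure
  have hCD : C ∩ D ⊆ L'' := by
    rintro x ⟨hxC, hxD⟩
    rcases hxC with hxA | hxU
    · rcases hxD with hxB | hxV
      · exact (Set.disjoint_left.1 hAB hxA hxB).elim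
      · exact (keyUV x (hAU ⟨hxA, hclV_M hxV⟩) hxV).elim
    · rcases hxD with hxB | hxV
      · exact (keyVU x (hBV ⟨hxB, hclU_M hxU⟩) hxU).elim
      · have hxM : x ∈ M := hclU_M hxU
        by_contra hxL
        have hmem : x ∈ M \ L'' := ⟨hxM, hxL⟩
        rw [hpart] at hmem
        rcases hmem with h | h
        · exact keyUV x h hxV
        · exact keyVU x h hxU
  set S : Set Z := C \ L'' with hSdef
  set T : Set Z := D \ L'' with hTdef
  have hclS : closure S ⊆ C := closure_minimal diff_subset hC
  have hclT : closure T ⊆ D := closure_minimal diff_subset hD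
  have hsep1 : ∀ x ∈ closure S, x ∉ T := fun x hxS hxT => hxT.2 (hCD ⟨hclS hxS, hxT.1⟩)
  have hsep2 : ∀ x ∈ S, x ∉ closure T := fun x hxS hxT => hxS.2 (hCD ⟨hxS.1, hclT hxT⟩)
  obtain ⟨U, V, hUo, hVo, hSU, hTV, hUVd⟩ := sepNhds hsep1 hsep2
  have hAS : A ⊆ S := fun x hxA =>
    ⟨Or.inl hxA, fun hxL => (hU0sub (hAU ⟨hxA, hLM hxL⟩)).2 hxL⟩
  have hBT : B ⊆ T := fun x hxB =>
    ⟨Or.inl hxB, fun hxL => (hV0sub (hBV ⟨hxB, hLM hxL⟩)).2 hxL⟩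
  have hU0S : OU ∩ M ⊆ S := fun x hx =>
    ⟨Or.inr (subset_closure hx), (hU0sub hx).2⟩
  have hV0T : OV ∩ M ⊆ T := fun x hx =>
    ⟨Or.inr (subset_closure hx), (hV0sub hx).2⟩
  refine ⟨(U ∪ V)ᶜ, ⟨isClosed_compl_iff.2 (hUo.union hVo), U, V, hUo, hVo,
    hAS.trans hSU, hBT.trans hTV, hUVd, compl_compl _⟩, ?_⟩
  rintro x ⟨hxL, hxM⟩
  by_contra hxnL
  have hmem : x ∈ M \ L'' := ⟨hxM, hxnL⟩
  rw [hpart] at hmem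
  rcases hmem with h | h
  · exact hxL (Or.inl (hSU (hU0S h)))
  · exact hxL (Or.inr (hTV (hV0T h)))

/-- Transfer a partition in the subspace topology of a closed set `M` to an extension
in the ambient space. -/
lemma extend_partition_subtype {M A B : Set Z} (hM : IsClosed M)
    (hA : IsClosed A) (hB : IsClosed B) (hAB : Disjoint A B)
    {L' : Set ↥M} (h : IsPartitionBetween (↥M) L' (Subtype.val ⁻¹' A) (Subtype.val ⁻¹' B)) :
    ∃ L : Set Z, IsPartitionBetween Z L A B ∧ L ∩ M ⊆ Subtype.val '' L' := by
  obtain ⟨hL', U, V, hU, hV, hAU, hBV, hUV, hcompl⟩ := h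
  obtain ⟨OU, hOU, hUeq⟩ := isOpen_induced_iff.1 hU
  obtain ⟨OV, hOV, hVeq⟩ := isOpen_induced_iff.1 hV
  have himgU : Subtype.val '' U = OU ∩ M := by
    rw [← hUeq, Subtype.image_preimage_coe, inter_comm]
  have himgV : Subtype.val '' V = OV ∩ M := by
    rw [← hVeq, Subtype.image_preimage_coe, inter_comm]
  have hinj : Function.Injective (Subtype.val : ↥M → Z) := Subtype.val_injective
  have himg_compl : ∀ s : Set ↥M, Subtype.val '' sᶜ = M \ Subtype.val '' s := by
    intro s
    ext x
    constructor
    · rintro ⟨y, hy, rfl⟩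
      refine ⟨y.2, fun hx => ?_⟩
      obtain ⟨z, hz, hzx⟩ := hx
      exact hy (by rwa [show z = y from Subtype.ext hzx] at hz)
    · rintro ⟨hxM, hx⟩
      exact ⟨⟨x, hxM⟩, fun hmem => hx ⟨⟨x, hxM⟩, hmem, rfl⟩, rfl⟩
  apply extend_partition (OU := OU) (OV := OV) hM hA hB hAB hOU hOV
  · rintro x ⟨hxA, hxM⟩
    have : (⟨x, hxM⟩ : ↥M) ∈ U := hAU hxA
    rw [← himgU]
    exact ⟨⟨x, hxM⟩, this, rfl⟩
  · rintro x ⟨hxB, hxM⟩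
    have : (⟨x, hxM⟩ : ↥M) ∈ V := hBV hxB
    rw [← himgV]
    exact ⟨⟨x, hxM⟩, this, rfl⟩
  · rw [← himgU, ← himgV]
    exact (Set.disjoint_image_iff hinj).2 hUV
  · rw [← himgU, ← himgV, ← image_union, ← hcompl, himg_compl]
  · exact fun x ⟨y, _, hyx⟩ => hyx ▸ y.2

end Aux

/-- Dichotomy: if `Z` is a strongly infinite-dimensional compact metrizable space and
`Y ⊆ Z` is `G_δ`, then `Y` or `Z \ Y` contains a strongly infinite-dimensional compactum. -/
theorem stmt11 (Z : Type*) [TopologicalSpace Z] [CompactSpace Z] [MetrizableSpace Z]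
    (hZ : StronglyInfiniteDimensional Z) (Y : Set Z) (hY : IsGδ Y) :
    (∃ F : Set Z, F ⊆ Y ∧ IsCompact F ∧ StronglyInfiniteDimensional ↥F) ∨
    (∃ F : Set Z, F ⊆ Yᶜ ∧ IsCompact F ∧ StronglyInfiniteDimensional ↥F) := by
  classical
  obtain ⟨A, B, hABcl, hess⟩ := hZ
  obtain ⟨f, hf, hYeq⟩ := hY.eq_iInter_nat
  by_cases hR : ∃ F : Set Z, F ⊆ Yᶜ ∧ IsCompact F ∧ StronglyInfiniteDimensional ↥F
  · exact Or.inr hR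
  left
  push_neg at hR
  set σ : ℕ ≃ ℕ ⊕ ℕ × ℕ := (Denumerable.eqv (ℕ ⊕ ℕ × ℕ)).symm with hσdef
  set K : ℕ → Set Z := fun n => (f n)ᶜ with hKdef
  have hKcl : ∀ n, IsClosed (K n) := fun n => (hf n).isClosed_compl
  have hKY : ∀ n, K n ⊆ Yᶜ := by
    intro n
    apply compl_subset_compl.2
    rw [hYeq]
    exact iInter_subset f n
  have hKnot : ∀ n, ¬ StronglyInfiniteDimensional ↥(K n) :=
    fun n => hR _ (hKY n) (hKcl n).isCompact
  have key : ∀ n : ℕ, ∃ L : ℕ → Set Z,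
      (∀ i, IsPartitionBetween Z (L i) (A (σ.symm (.inr (n, i)))) (B (σ.symm (.inr (n, i))))) ∧
      (⋂ i, L i) ∩ K n = ∅ := by
    intro n
    set A' : ℕ → Set ↥(K n) := fun i => Subtype.val ⁻¹' (A (σ.symm (.inr (n, i)))) with hA'def
    set B' : ℕ → Set ↥(K n) := fun i => Subtype.val ⁻¹' (B (σ.symm (.inr (n, i)))) with hB'def
    have hpairs : ∀ i, IsClosed (A' i) ∧ IsClosed (B' i) ∧ Disjoint (A' i) (B' i) := by
      intro i
      obtain ⟨h1, h2, h3⟩ := hABcl (σ.symm (.inr (n, i)))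
      exact ⟨h1.preimage continuous_subtype_val, h2.preimage continuous_subtype_val,
        h3.preimage _⟩
    have hnotess : ¬ EssentialFamily ↥(K n) A' B' := fun h => hKnot n ⟨A', B', h⟩
    rw [EssentialFamily, not_and] at hnotess
    have h2 := hnotess hpairs
    push_neg at h2
    obtain ⟨L', hL'p, hL'e⟩ := h2
    have hext : ∀ i, ∃ L : Set Z,
        IsPartitionBetween Z L (A (σ.symm (.inr (n, i)))) (B (σ.symm (.inr (n, i)))) ∧
        L ∩ K n ⊆ Subtype.val '' (L' i) := by
      intro i
      obtain ⟨h1, h2, h3⟩ := hABcl (σ.symm (.inr (n, i)))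
      exact extend_partition_subtype (hKcl n) h1 h2 h3 (hL'p i)
    choose L hLp hLM using hext
    refine ⟨L, hLp, ?_⟩
    rw [eq_empty_iff_forall_notMem]
    rintro x ⟨hxL, hxK⟩
    have hmem : ∀ i, (⟨x, hxK⟩ : ↥(K n)) ∈ L' i := by
      intro i
      obtain ⟨y, hy, hyx⟩ := hLM i ⟨mem_iInter.1 hxL i, hxK⟩
      rwa [show y = ⟨x, hxK⟩ from Subtype.ext hyx] at hy
    have : (⟨x, hxK⟩ : ↥(K n)) ∈ ⋂ i, L' i := mem_iInter.2 hmem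
    rw [hL'e] at this
    exact this
  choose L hLp hLe using key
  set M : Set Z := ⋂ n, ⋂ i, L n i with hMdef
  have hMcl : IsClosed M := isClosed_iInter fun n => isClosed_iInter fun i => (hLp n i).1
  have hxM_mem : ∀ x, x ∈ M → ∀ n i, x ∈ L n i := by
    intro x hx n i
    exact mem_iInter.1 (mem_iInter.1 hx n) i
  have hMY : M ⊆ Y := by
    intro x hx
    rw [hYeq, mem_iInter]
    intro n
    by_contra hc
    have hxK : x ∈ K n := hc
    have hmem : x ∈ (⋂ i, L n i) ∩ K n := ⟨mem_iInter.2 fun i => hxM_mem x hx n i, hxK⟩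
    rw [hLe n] at hmem
    exact hmem
  refine ⟨M, hMY, hMcl.isCompact, ?_⟩
  refine ⟨fun j => Subtype.val ⁻¹' (A (σ.symm (.inl j))),
    fun j => Subtype.val ⁻¹' (B (σ.symm (.inl j))), ?_, ?_⟩
  · intro j
    obtain ⟨h1, h2, h3⟩ := hABcl (σ.symm (.inl j))
    exact ⟨h1.preimage continuous_subtype_val, h2.preimage continuous_subtype_val,
      h3.preimage _⟩
  · intro P hP
    have hext : ∀ j, ∃ Q : Set Z,
        IsPartitionBetween Z Q (A (σ.symm (.inl j))) (B (σ.symm (.inl j))) ∧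
        Q ∩ M ⊆ Subtype.val '' (P j) := by
      intro j
      obtain ⟨h1, h2, h3⟩ := hABcl (σ.symm (.inl j))
      exact extend_partition_subtype hMcl h1 h2 h3 (hP j)
    choose Q hQp hQM using hext
    set Lt : ℕ → Set Z := fun k => Sum.elim Q (fun p => L p.1 p.2) (σ k) with hLtdef
    have hLt : ∀ k, IsPartitionBetween Z (Lt k) (A k) (B k) := by
      intro k
      have hk : σ.symm (σ k) = k := σ.symm_apply_apply k
      rcases hσk : σ k with j | ⟨n, i⟩
      · have := hQp j
        rw [← hσk, hk] at this
        simpa only [hLtdef, hσk, Sum.elim_inl] using this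
      · have := hLp n i
        rw [← hσk, hk] at this
        simpa only [hLtdef, hσk, Sum.elim_inr] using this
    obtain ⟨x, hx⟩ := hess Lt hLt
    have hxLt : ∀ k, x ∈ Lt k := fun k => mem_iInter.1 hx k
    have hxM : x ∈ M := by
      refine mem_iInter.2 fun n => mem_iInter.2 fun i => ?_
      have := hxLt (σ.symm (.inr (n, i)))
      simpa only [hLtdef, σ.apply_symm_apply, Sum.elim_inr] using this
    refine ⟨⟨x, hxM⟩, mem_iInter.2 fun j => ?_⟩
    have hxQ : x ∈ Q j := by
      have := hxLt (σ.symm (.inl j))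
      simpa only [hLtdef, σ.apply_symm_apply, Sum.elim_inl] using this
    obtain ⟨y, hy, hyx⟩ := hQM j ⟨hxQ, hxM⟩
    rwa [show y = ⟨x, hxM⟩ from Subtype.ext hyx] at hy
end

section
/- Let X be a strongly infinite-dimensional compact metrizable space and X = ⋃_{n∈ω} X_n where each X_n is a G_δ subset of X. Then some X_n contains a strongly infinite-dimensional compactum. -/
open Set TopologicalSpace

namespace Stmt12Aux

variable {X : Type*} [TopologicalSpace X]

/-- `L` is a partition between `A` and `B` relative to the closed subset `F` of `X`. -/
def RPart (F L A B : Set X) : Prop :=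
  IsClosed L ∧ L ⊆ F ∧ ∃ U V : Set X, IsOpen U ∧ IsOpen V ∧ A ⊆ U ∧ B ⊆ V ∧
    Disjoint (U ∩ F) (V ∩ F) ∧ F \ L = (U ∪ V) ∩ F

/-- Essential family relative to the subset `F` of `X`. -/
def REss (F : Set X) (A B : ℕ → Set X) : Prop :=
  (∀ i, IsClosed (A i) ∧ A i ⊆ F ∧ IsClosed (B i) ∧ B i ⊆ F ∧ Disjoint (A i) (B i)) ∧
  ∀ L : ℕ → Set X, (∀ i, RPart F (L i) (A i) (B i)) → (⋂ i, L i).Nonempty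

lemma ress_univ (hX : StronglyInfiniteDimensional X) :
    ∃ A B : ℕ → Set X, REss univ A B := by
  obtain ⟨A, B, h1, h2⟩ := hX
  refine ⟨A, B, fun i => ⟨(h1 i).1, subset_univ _, (h1 i).2.1, subset_univ _, (h1 i).2.2⟩, ?_⟩
  intro L hL
  apply h2
  intro i
  obtain ⟨hc, _, U, V, hU, hV, hAU, hBV, hdis, heq⟩ := hL i
  refine ⟨hc, U, V, hU, hV, hAU, hBV, by simpa using hdis, ?_⟩
  rw [compl_eq_univ_diff, heq, inter_univ]

lemma ress_nonempty {F : Set X} {A B : ℕ → Set X} (h : REss F A B) : F.Nonempty := by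
  rcases F.eq_empty_or_nonempty with rfl | h'
  · exfalso
    have h2 := h.2 (fun _ => (∅ : Set X)) ?_
    · simp only [iInter_const] at h2
      exact not_nonempty_empty h2
    · intro i
      refine ⟨isClosed_empty, Subset.rfl, ∅, ∅, isOpen_empty, isOpen_empty,
        (h.1 i).2.1, (h.1 i).2.2.2.1, by simp, by simp⟩
  · exact h'

lemma ress_of_sid {F : Set X} (hF : IsClosed F)
    (h : StronglyInfiniteDimensional (↥F)) : ∃ A B : ℕ → Set X, REss F A B := by
  obtain ⟨A', B', h1, h2⟩ := h
  refine ⟨fun i => (↑) '' A' i, fun i => (↑) '' B' i, fun i =>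
    ⟨hF.isClosedEmbedding_subtypeVal.isClosedMap _ (h1 i).1, Subtype.coe_image_subset F _,
     hF.isClosedEmbedding_subtypeVal.isClosedMap _ (h1 i).2.1, Subtype.coe_image_subset F _,
     (Set.disjoint_image_iff Subtype.val_injective).mpr (h1 i).2.2⟩, ?_⟩
  intro L hL
  have key : ∀ i, IsPartitionBetween (↥F) ((↑) ⁻¹' L i) (A' i) (B' i) := by
    intro i
    obtain ⟨hc, hLF, U, V, hU, hV, hAU, hBV, hdis, heq⟩ := hL i
    refine ⟨hc.preimage continuous_subtype_val, (↑) ⁻¹' U, (↑) ⁻¹' V,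
      hU.preimage continuous_subtype_val, hV.preimage continuous_subtype_val,
      fun x hx => hAU ⟨x, hx, rfl⟩, fun x hx => hBV ⟨x, hx, rfl⟩, ?_, ?_⟩
    · rw [Set.disjoint_left]
      intro x hxU hxV
      exact Set.disjoint_left.mp hdis ⟨hxU, x.2⟩ ⟨hxV, x.2⟩
    · ext x
      simp only [mem_compl_iff, mem_preimage, mem_union]
      constructor
      · intro hx
        have hmem : (x : X) ∈ F \ L i := ⟨x.2, hx⟩
        rw [heq] at hmem
        exact hmem.1
      · intro hx hxL
        have hmem : (x : X) ∈ (U ∪ V) ∩ F := ⟨hx, x.2⟩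
        rw [← heq] at hmem
        exact hmem.2 hxL
  obtain ⟨x, hx⟩ := h2 _ key
  rw [mem_iInter] at hx
  exact ⟨(x : X), mem_iInter.mpr fun i => hx i⟩

lemma sid_of_ress {F : Set X} (hF : IsClosed F) {A B : ℕ → Set X} (h : REss F A B) :
    StronglyInfiniteDimensional (↥F) := by
  refine ⟨fun i => (↑) ⁻¹' A i, fun i => (↑) ⁻¹' B i, fun i =>
    ⟨(h.1 i).1.preimage continuous_subtype_val, (h.1 i).2.2.1.preimage continuous_subtype_val,
     Disjoint.preimage _ (h.1 i).2.2.2.2⟩, ?_⟩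
  intro L' hL'
  have key : ∀ i, RPart F ((↑) '' L' i) (A i) (B i) := by
    intro i
    obtain ⟨hc, U', V', hU', hV', hAU', hBV', hdis', heq'⟩ := hL' i
    obtain ⟨U, hU, hUeq⟩ := isOpen_induced_iff.mp hU'
    obtain ⟨V, hV, hVeq⟩ := isOpen_induced_iff.mp hV'
    refine ⟨hF.isClosedEmbedding_subtypeVal.isClosedMap _ hc, Subtype.coe_image_subset F _,
      U, V, hU, hV, ?_, ?_, ?_, ?_⟩
    · intro x hx
      have hxF : x ∈ F := (h.1 i).2.1 hx
      have hmem : (⟨x, hxF⟩ : ↥F) ∈ U' := hAU' hx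
      rw [← hUeq] at hmem
      exact hmem
    · intro x hx
      have hxF : x ∈ F := (h.1 i).2.2.2.1 hx
      have hmem : (⟨x, hxF⟩ : ↥F) ∈ V' := hBV' hx
      rw [← hVeq] at hmem
      exact hmem
    · rw [Set.disjoint_left]
      rintro x ⟨hxU, hxF⟩ ⟨hxV, -⟩
      have hh1 : (⟨x, hxF⟩ : ↥F) ∈ U' := by rw [← hUeq]; exact hxU
      have hh2 : (⟨x, hxF⟩ : ↥F) ∈ V' := by rw [← hVeq]; exact hxV
      exact Set.disjoint_left.mp hdis' hh1 hh2
    · ext x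
      simp only [mem_diff, mem_inter_iff, mem_union]
      constructor
      · rintro ⟨hxF, hxL⟩
        have hcompl : (⟨x, hxF⟩ : ↥F) ∈ (L' i)ᶜ := fun hmem => hxL ⟨_, hmem, rfl⟩
        rw [heq'] at hcompl
        rcases hcompl with h1 | h1
        · rw [← hUeq] at h1; exact ⟨Or.inl h1, hxF⟩
        · rw [← hVeq] at h1; exact ⟨Or.inr h1, hxF⟩
      · rintro ⟨hxUV, hxF⟩
        refine ⟨hxF, ?_⟩
        rintro ⟨y, hy, rfl⟩
        have hcompl : y ∈ (L' i)ᶜ := by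
          rw [heq']
          rcases hxUV with h1 | h1
          · left; rw [← hUeq]; exact h1
          · right; rw [← hVeq]; exact h1
        exact hcompl hy
  obtain ⟨x, hx⟩ := h.2 _ key
  rw [mem_iInter] at hx
  have hxF : x ∈ F := Subtype.coe_image_subset F _ (hx 0)
  refine ⟨⟨x, hxF⟩, mem_iInter.mpr fun i => ?_⟩
  obtain ⟨y, hy, hyx⟩ := hx i
  have : y = ⟨x, hxF⟩ := Subtype.ext hyx
  exact this ▸ hy

lemma separatedNhds_of_sep [MetrizableSpace X] {s t : Set X}
    (h1 : Disjoint (closure s) t) (h2 : Disjoint s (closure t)) : SeparatedNhds s t := by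
  letI : MetricSpace X := TopologicalSpace.metrizableSpaceMetric X
  haveI : PerfectlyNormalSpace X := { closed_gdelta := fun _ hc => hc.isGδ }
  exact separatedNhds_iff_disjoint.mpr (completely_normal h1 h2)

/-- The partition extension lemma: a partition relative to a closed subset `K` between the
traces of `A` and `B` extends to a partition relative to `F` between `A` and `B` whose trace
on `K` is contained in the original one. -/
lemma extend [MetrizableSpace X] {F K N A B : Set X} (hF : IsClosed F) (hK : IsClosed K)
    (hA : IsClosed A) (hB : IsClosed B) (hAB : Disjoint A B)
    (hN : RPart K N (A ∩ K) (B ∩ K)) :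
    ∃ L : Set X, RPart F L A B ∧ L ∩ K ⊆ N := by
  obtain ⟨hNc, hNK, U₁, V₁, hU₁, hV₁, hAU₁, hBV₁, hdis₁, heq₁⟩ := hN
  have hclU : closure (U₁ ∩ K) ⊆ K := closure_minimal inter_subset_right hK
  have hclV : closure (V₁ ∩ K) ⊆ K := closure_minimal inter_subset_right hK
  have hclU_V : closure (U₁ ∩ K) ⊆ V₁ᶜ := by
    apply closure_minimal _ (isClosed_compl_iff.mpr hV₁)
    intro x hx hxV
    exact Set.disjoint_left.mp hdis₁ hx ⟨hxV, hx.2⟩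
  have hclV_U : closure (V₁ ∩ K) ⊆ U₁ᶜ := by
    apply closure_minimal _ (isClosed_compl_iff.mpr hU₁)
    intro x hx hxU
    exact Set.disjoint_left.mp hdis₁ ⟨hxU, hx.2⟩ hx
  have sep1 : Disjoint (closure (A ∪ U₁ ∩ K)) (B ∪ V₁ ∩ K) := by
    rw [closure_union, hA.closure_eq, Set.disjoint_left]
    rintro x (hx | hx) (hx' | hx')
    · exact Set.disjoint_left.mp hAB hx hx'
    · exact Set.disjoint_left.mp hdis₁ ⟨hAU₁ ⟨hx, hx'.2⟩, hx'.2⟩ hx'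
    · exact hclU_V hx (hBV₁ ⟨hx', hclU hx⟩)
    · exact hclU_V hx hx'.1
  have sep2 : Disjoint (A ∪ U₁ ∩ K) (closure (B ∪ V₁ ∩ K)) := by
    rw [closure_union, hB.closure_eq, Set.disjoint_right]
    rintro x (hx | hx) (hx' | hx')
    · exact Set.disjoint_left.mp hAB hx' hx
    · exact Set.disjoint_left.mp hdis₁ hx' ⟨hBV₁ ⟨hx, hx'.2⟩, hx'.2⟩
    · exact hclV_U hx (hAU₁ ⟨hx', hclV hx⟩)
    · exact hclV_U hx hx'.1
  obtain ⟨U, V, hU, hV, hSU, hTV, hUV⟩ := separatedNhds_of_sep sep1 sep2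
  refine ⟨F \ (U ∪ V), ⟨hF.sdiff (hU.union hV), diff_subset, U, V, hU, hV,
    fun x hx => hSU (Or.inl hx), fun x hx => hTV (Or.inl hx),
    hUV.mono inter_subset_left inter_subset_left, ?_⟩, ?_⟩
  · ext x
    simp only [mem_diff, mem_union, mem_inter_iff]
    tauto
  · rintro x ⟨hxL, hxK⟩
    by_contra hxN
    have hmem : x ∈ K \ N := ⟨hxK, hxN⟩
    rw [heq₁] at hmem
    rcases hmem.1 with h1 | h1
    · exact hxL.2 (Or.inl (hSU (Or.inr ⟨h1, hmem.2⟩)))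
    · exact hxL.2 (Or.inr (hTV (Or.inr ⟨h1, hmem.2⟩)))

/-- The dichotomy step: if `F` carries a relative essential family and none of the compacta
`F \ U k` is strongly infinite-dimensional, then there is a subset of `F ∩ ⋂ k, U k` which is
closed and carries a relative essential family. -/
lemma step [MetrizableSpace X] {F : Set X} (hF : IsClosed F) {A B : ℕ → Set X}
    (hE : REss F A B) (U : ℕ → Set X) (hUo : ∀ k, IsOpen (U k))
    (hK : ∀ k, ¬ StronglyInfiniteDimensional ↥(F \ U k)) :
    ∃ (F' : Set X) (A' B' : ℕ → Set X),
      IsClosed F' ∧ F' ⊆ F ∧ (∀ k, F' ⊆ U k) ∧ REss F' A' B' := by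
  classical
  set d : ℕ × ℕ ≃ ℕ := Nat.pairEquiv with hd
  have hforblock : ∀ k : ℕ, ∃ N : ℕ → Set X,
      (∀ j, RPart (F \ U k) (N j) (A (d (k+1, j)) ∩ (F \ U k)) (B (d (k+1, j)) ∩ (F \ U k))) ∧
      (⋂ j, N j) = ∅ := by
    intro k
    have hKc : IsClosed (F \ U k) := hF.sdiff (hUo k)
    have hnress : ¬ REss (F \ U k) (fun j => A (d (k+1, j)) ∩ (F \ U k))
        (fun j => B (d (k+1, j)) ∩ (F \ U k)) :=
      fun h => hK k (sid_of_ress hKc h)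
    have c1 : ∀ j, IsClosed (A (d (k+1, j)) ∩ (F \ U k)) ∧ A (d (k+1, j)) ∩ (F \ U k) ⊆ F \ U k ∧
        IsClosed (B (d (k+1, j)) ∩ (F \ U k)) ∧ B (d (k+1, j)) ∩ (F \ U k) ⊆ F \ U k ∧
        Disjoint (A (d (k+1, j)) ∩ (F \ U k)) (B (d (k+1, j)) ∩ (F \ U k)) := fun j =>
      ⟨(hE.1 _).1.inter hKc, inter_subset_right, (hE.1 _).2.2.1.inter hKc, inter_subset_right,
        ((hE.1 _).2.2.2.2).mono inter_subset_left inter_subset_left⟩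
    have c2 : ¬ ∀ L : ℕ → Set X, (∀ j, RPart (F \ U k) (L j)
        (A (d (k+1, j)) ∩ (F \ U k)) (B (d (k+1, j)) ∩ (F \ U k))) → (⋂ j, L j).Nonempty :=
      fun h2 => hnress ⟨c1, h2⟩
    push_neg at c2
    obtain ⟨N, hN1, hN2⟩ := c2
    exact ⟨N, hN1, hN2⟩
  choose N hN1 hN2 using hforblock
  have hext : ∀ k j, ∃ L, RPart F L (A (d (k+1, j))) (B (d (k+1, j))) ∧ L ∩ (F \ U k) ⊆ N k j :=
    fun k j => extend hF (hF.sdiff (hUo k)) ((hE.1 _).1) ((hE.1 _).2.2.1)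
      ((hE.1 _).2.2.2.2) (hN1 k j)
  choose Lb hLb1 hLb2 using hext
  set F' : Set X := F ∩ ⋂ k, ⋂ j, Lb k j with hF'def
  have hF'c : IsClosed F' :=
    hF.inter (isClosed_iInter fun k => isClosed_iInter fun j => (hLb1 k j).1)
  have hF'F : F' ⊆ F := inter_subset_left
  have hF'U : ∀ k, F' ⊆ U k := by
    intro k x hx
    by_contra hxU
    have hxK : x ∈ F \ U k := ⟨hF'F hx, hxU⟩
    have hxL : ∀ j, x ∈ Lb k j := fun j =>
      mem_iInter.mp (mem_iInter.mp hx.2 k) j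
    have hmem : x ∈ ⋂ j, N k j := mem_iInter.mpr fun j => hLb2 k j ⟨hxL j, hxK⟩
    rw [hN2 k] at hmem
    exact hmem
  refine ⟨F', fun j => A (d (0, j)) ∩ F', fun j => B (d (0, j)) ∩ F', hF'c, hF'F, hF'U,
    fun j => ⟨(hE.1 _).1.inter hF'c, inter_subset_right, (hE.1 _).2.2.1.inter hF'c,
      inter_subset_right, ((hE.1 _).2.2.2.2).mono inter_subset_left inter_subset_left⟩, ?_⟩
  intro M hM
  have hext0 : ∀ j, ∃ L, RPart F L (A (d (0, j))) (B (d (0, j))) ∧ L ∩ F' ⊆ M j :=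
    fun j => extend hF hF'c ((hE.1 _).1) ((hE.1 _).2.2.1) ((hE.1 _).2.2.2.2) (hM j)
  choose L0 hL01 hL02 using hext0
  set Ltot : ℕ → Set X := fun i =>
    if (d.symm i).1 = 0 then L0 (d.symm i).2 else Lb ((d.symm i).1 - 1) (d.symm i).2 with hLtotdef
  have hLtot : ∀ i, RPart F (Ltot i) (A i) (B i) := by
    intro i
    rcases h : d.symm i with ⟨k, j⟩
    have hi : d (k, j) = i := by rw [← h]; exact d.apply_symm_apply i
    cases k with
    | zero =>
      have heq : Ltot i = L0 j := by simp [hLtotdef, h]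
      rw [heq, ← hi]
      exact hL01 j
    | succ k =>
      have heq : Ltot i = Lb k j := by simp [hLtotdef, h]
      rw [heq, ← hi]
      exact hLb1 k j
  obtain ⟨x, hx⟩ := hE.2 Ltot hLtot
  rw [mem_iInter] at hx
  have hxF : x ∈ F := (hLtot 0).2.1 (hx 0)
  have hxLb : ∀ k j, x ∈ Lb k j := by
    intro k j
    have hmem := hx (d (k+1, j))
    have he : d.symm (d (k+1, j)) = (k+1, j) := d.symm_apply_apply _
    simpa [hLtotdef, he] using hmem
  have hxL0 : ∀ j, x ∈ L0 j := by
    intro j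
    have hmem := hx (d (0, j))
    have he : d.symm (d (0, j)) = (0, j) := d.symm_apply_apply _
    simpa [hLtotdef, he] using hmem
  have hxF' : x ∈ F' := ⟨hxF, mem_iInter.mpr fun k => mem_iInter.mpr fun j => hxLb k j⟩
  exact ⟨x, mem_iInter.mpr fun j => hL02 j ⟨hxL0 j, hxF'⟩⟩

end Stmt12Aux

open Stmt12Aux in
/-- If a strongly infinite-dimensional compact metrizable space is a countable union of
`G_δ` sets, then some piece contains a strongly infinite-dimensional compactum. -/
theorem stmt12 (X : Type*) [TopologicalSpace X] [CompactSpace X] [MetrizableSpace X]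
    (hX : StronglyInfiniteDimensional X) (Xn : ℕ → Set X)
    (hGδ : ∀ n, IsGδ (Xn n)) (hcover : ⋃ n, Xn n = Set.univ) :
    ∃ n, ∃ F : Set X, F ⊆ Xn n ∧ IsCompact F ∧ StronglyInfiniteDimensional ↥F := by
  classical
  by_contra hcon
  push_neg at hcon
  obtain ⟨A₀, B₀, hE₀⟩ := ress_univ hX
  have hU : ∀ n, ∃ U : ℕ → Set X, (∀ k, IsOpen (U k)) ∧ Xn n = ⋂ k, U k := fun n =>
    isGδ_iff_eq_iInter_nat.mp (hGδ n)
  choose Uo hUo hUeq using hU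
  have hstep : ∀ (n : ℕ) (F : Set X) (A B : ℕ → Set X), IsClosed F → REss F A B →
      ∃ (F' : Set X) (A' B' : ℕ → Set X),
        IsClosed F' ∧ F' ⊆ F ∧ F' ∩ Xn n = ∅ ∧ REss F' A' B' := by
    intro n F A B hFc hFE
    by_cases hsid : ∃ k, StronglyInfiniteDimensional ↥(F \ Uo n k)
    · obtain ⟨k, hk⟩ := hsid
      have hclosed : IsClosed (F \ Uo n k) := hFc.sdiff (hUo n k)
      obtain ⟨A', B', hE'⟩ := ress_of_sid hclosed hk
      refine ⟨F \ Uo n k, A', B', hclosed, diff_subset, ?_, hE'⟩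
      apply eq_empty_iff_forall_notMem.mpr
      rintro x ⟨⟨-, hxU⟩, hxXn⟩
      rw [hUeq n] at hxXn
      exact hxU (mem_iInter.mp hxXn k)
    · push_neg at hsid
      obtain ⟨F', A', B', h1, h2, h3, h4⟩ := step hFc hFE (Uo n) (hUo n) hsid
      exfalso
      have hsub : F' ⊆ Xn n := by rw [hUeq n]; exact subset_iInter h3
      exact hcon n F' hsub h1.isCompact (sid_of_ress h1 h4)
  let T := {p : Set X × (ℕ → Set X) × (ℕ → Set X) // IsClosed p.1 ∧ REss p.1 p.2.1 p.2.2}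
  have hstep' : ∀ (n : ℕ) (t : T), ∃ t' : T, t'.1.1 ⊆ t.1.1 ∧ t'.1.1 ∩ Xn n = ∅ := by
    intro n t
    obtain ⟨F', A', B', h1, h2, h3, h4⟩ := hstep n t.1.1 t.1.2.1 t.1.2.2 t.2.1 t.2.2
    exact ⟨⟨(F', A', B'), h1, h4⟩, h2, h3⟩
  choose g hg1 hg2 using hstep'
  let t0 : T := ⟨(univ, A₀, B₀), isClosed_univ, hE₀⟩
  let f : ℕ → T := fun n => Nat.rec t0 (fun n t => g n t) n
  set G : ℕ → Set X := fun n => (f n).1.1 with hG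
  have hGd : ∀ n, G (n+1) ⊆ G n := fun n => hg1 n (f n)
  have hGX : ∀ n, G (n+1) ∩ Xn n = ∅ := fun n => hg2 n (f n)
  have hGc : ∀ n, IsClosed (G n) := fun n => (f n).2.1
  have hGn : ∀ n, (G n).Nonempty := fun n => ress_nonempty (f n).2.2
  obtain ⟨x, hx⟩ := IsCompact.nonempty_iInter_of_sequence_nonempty_isCompact_isClosed
    G hGd hGn (hGc 0).isCompact hGc
  rw [mem_iInter] at hx
  have hxcov : x ∈ ⋃ n, Xn n := hcover ▸ mem_univ x
  obtain ⟨n, hn⟩ := mem_iUnion.mp hxcov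
  have hmem : x ∈ G (n+1) ∩ Xn n := ⟨hx (n+1), hn⟩
  rw [hGX n] at hmem
  exact hmem
end

section
/- A finite product of compact metrizable C-spaces is a C-space. In particular, if K is a compact metrizable C-space then K^p is a C-space for every p ∈ ℕ. -/
/-!
Refine a cover of `X × Y` by open rectangles `a ×ˢ b` with `a` from a cover of `X` and `b` from
a cover of `Y`, which compactness of both factors allows. Split the given sequence of covers
into countably many rows. In row `i`, the C-property of `X` yields disjoint refinements of the
`X`-sides, of which finitely many already cover the compact space `X`; the common refinement of
the corresponding finitely many `Y`-sides is a single open cover `Cᵢ` of `Y`. The C-property of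
`Y` applied to `(Cᵢ)ᵢ` yields disjoint families `Gᵢ`, and the products of the members of row `i`
with those of `Gᵢ` are the required disjoint refinements. Finite products follow by induction.
-/

open Set TopologicalSpace

universe u v

section Refinements

variable {X Y : Type*}

theorem Set.PairwiseDisjoint.image2_prod {F : Set (Set X)} {G : Set (Set Y)}
    (hF : F.PairwiseDisjoint id) (hG : G.PairwiseDisjoint id) :
    (image2 (· ×ˢ ·) F G).PairwiseDisjoint id := by
  rintro _ ⟨f, hf, g, hg, rfl⟩ _ ⟨f', hf', g', hg', rfl⟩ hne
  rcases eq_or_ne f f' with rfl | hff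
  · exact disjoint_prod.2 (Or.inr (hG hg hg' fun hgg => hne (hgg ▸ rfl)))
  · exact disjoint_prod.2 (Or.inl (hF hf hf' hff))

def commonRefinement {κ : Type*} (t : Finset κ) (B : κ → Set (Set X)) : Set (Set X) :=
  (fun f : κ → Set X => ⋂ k ∈ t, f k) '' {f | ∀ k ∈ t, f k ∈ B k}

theorem exists_mem_superset_of_mem_commonRefinement {κ : Type*} {t : Finset κ}
    {B : κ → Set (Set X)} {c : Set X} (hc : c ∈ commonRefinement t B) {k : κ} (hk : k ∈ t) :
    ∃ b ∈ B k, c ⊆ b := by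
  obtain ⟨f, hf, rfl⟩ := hc
  exact ⟨f k, hf k hk, biInter_subset_of_mem hk⟩

variable [TopologicalSpace X] [TopologicalSpace Y]

def IsOpenCovering (U : Set (Set X)) : Prop :=
  (∀ u ∈ U, IsOpen u) ∧ ⋃₀ U = univ

def IsDisjointOpenRefinement (V U : Set (Set X)) : Prop :=
  (∀ v ∈ V, IsOpen v) ∧ V.PairwiseDisjoint id ∧ ∀ v ∈ V, ∃ u ∈ U, v ⊆ u

theorem isCSpace_iff :
    IsCSpace X ↔ ∀ U : ℕ → Set (Set X), (∀ i, IsOpenCovering (U i)) →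
      ∃ V : ℕ → Set (Set X), (∀ i, IsDisjointOpenRefinement (V i) (U i)) ∧
        ⋃₀ ⋃ i, V i = univ :=
  Iff.rfl

theorem isDisjointOpenRefinement_empty (U : Set (Set X)) : IsDisjointOpenRefinement ∅ U := by
  simp [IsDisjointOpenRefinement]

theorem IsDisjointOpenRefinement.of_refines {V U W : Set (Set X)}
    (h : IsDisjointOpenRefinement V U) (hUW : ∀ u ∈ U, ∃ w ∈ W, u ⊆ w) :
    IsDisjointOpenRefinement V W := by
  refine ⟨h.1, h.2.1, fun v hv => ?_⟩
  obtain ⟨u, hu, hvu⟩ := h.2.2 v hv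
  obtain ⟨w, hw, huw⟩ := hUW u hu
  exact ⟨w, hw, hvu.trans huw⟩

theorem IsOpenCovering.preimage {U : Set (Set Y)} (hU : IsOpenCovering U) {f : X → Y}
    (hf : Continuous f) : IsOpenCovering ((f ⁻¹' ·) '' U) := by
  refine ⟨?_, ?_⟩
  · rintro _ ⟨u, hu, rfl⟩
    exact (hU.1 u hu).preimage hf
  · rw [sUnion_image, ← preimage_iUnion₂, ← sUnion_eq_biUnion, hU.2, preimage_univ]

theorem IsDisjointOpenRefinement.image_homeomorph {V : Set (Set X)} {U : Set (Set Y)}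
    (e : X ≃ₜ Y) (h : IsDisjointOpenRefinement V ((e ⁻¹' ·) '' U)) :
    IsDisjointOpenRefinement ((e '' ·) '' V) U := by
  obtain ⟨hopen, hdisj, hrefine⟩ := h
  refine ⟨?_, ?_, ?_⟩
  · rintro _ ⟨v, hv, rfl⟩
    exact e.isOpenMap v (hopen v hv)
  · rintro _ ⟨v, hv, rfl⟩ _ ⟨w, hw, rfl⟩ hne
    exact (disjoint_image_iff e.injective).2 (hdisj hv hw (ne_of_apply_ne _ hne))
  · rintro _ ⟨v, hv, rfl⟩
    obtain ⟨_, ⟨u, hu, rfl⟩, hvu⟩ := hrefine v hv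
    exact ⟨u, hu, image_subset_iff.2 hvu⟩

theorem IsDisjointOpenRefinement.image2_prod {F A : Set (Set X)} {G B : Set (Set Y)}
    {U : Set (Set (X × Y))} (hF : IsDisjointOpenRefinement F A)
    (hG : IsDisjointOpenRefinement G B) (hAB : ∀ a ∈ A, ∀ b ∈ B, ∃ u ∈ U, a ×ˢ b ⊆ u) :
    IsDisjointOpenRefinement (image2 (· ×ˢ ·) F G) U := by
  refine ⟨?_, hF.2.1.image2_prod hG.2.1, ?_⟩
  · rintro _ ⟨f, hf, g, hg, rfl⟩
    exact (hF.1 f hf).prod (hG.1 g hg)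
  · rintro _ ⟨f, hf, g, hg, rfl⟩
    obtain ⟨a, ha, hfa⟩ := hF.2.2 f hf
    obtain ⟨b, hb, hgb⟩ := hG.2.2 g hg
    obtain ⟨u, hu, habu⟩ := hAB a ha b hb
    exact ⟨u, hu, (prod_mono hfa hgb).trans habu⟩

theorem isOpenCovering_commonRefinement {κ : Type*} {t : Finset κ} {B : κ → Set (Set X)}
    (hB : ∀ k, IsOpenCovering (B k)) : IsOpenCovering (commonRefinement t B) := by
  refine ⟨?_, eq_univ_of_forall fun x => ?_⟩
  · rintro _ ⟨f, hf, rfl⟩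
    exact isOpen_biInter_finset fun k hk => (hB k).1 _ (hf k hk)
  · have hx : ∀ k, ∃ b ∈ B k, x ∈ b := fun k => mem_sUnion.1 ((hB k).2 ▸ mem_univ x)
    choose f hfB hxf using hx
    exact ⟨⋂ k ∈ t, f k, ⟨f, fun k _ => hfB k, rfl⟩, mem_iInter₂.2 fun k _ => hxf k⟩

end Refinements

section Rectangles

variable {X Y : Type*} [TopologicalSpace X] [TopologicalSpace Y]

theorem IsOpenCovering.exists_prod_refinement_of_mem [CompactSpace Y]
    {U : Set (Set (X × Y))} (hU : IsOpenCovering U) (x : X) :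
    ∃ a, IsOpen a ∧ x ∈ a ∧
      ∃ B : Set (Set Y), IsOpenCovering B ∧ ∀ b ∈ B, ∃ u ∈ U, a ×ˢ b ⊆ u := by
  have hrect : ∀ y : Y, ∃ u ∈ U, ∃ a b, IsOpen a ∧ IsOpen b ∧ x ∈ a ∧ y ∈ b ∧ a ×ˢ b ⊆ u := by
    intro y
    obtain ⟨u, hu, hxy⟩ := mem_sUnion.1 (hU.2 ▸ mem_univ (x, y))
    exact ⟨u, hu, isOpen_prod_iff.1 (hU.1 u hu) x y hxy⟩
  choose u hu a b ha hb hxa hyb hab using hrect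
  obtain ⟨t, ht⟩ := CompactSpace.elim_nhds_subcover b fun y => (hb y).mem_nhds (hyb y)
  refine ⟨⋂ y ∈ t, a y, isOpen_biInter_finset fun y _ => ha y, mem_iInter₂.2 fun y _ => hxa y,
    b '' t, ⟨?_, ?_⟩, ?_⟩
  · rintro _ ⟨y, -, rfl⟩
    exact hb y
  · rw [sUnion_image]
    exact ht
  · rintro _ ⟨y, hy, rfl⟩
    exact ⟨u y, hu y, (prod_mono (biInter_subset_of_mem hy) subset_rfl).trans (hab y)⟩

theorem IsOpenCovering.exists_prod_refinement [CompactSpace X] [CompactSpace Y]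
    {U : Set (Set (X × Y))} (hU : IsOpenCovering U) :
    ∃ (A : Set (Set X)) (B : Set (Set Y)), IsOpenCovering A ∧ IsOpenCovering B ∧
      ∀ a ∈ A, ∀ b ∈ B, ∃ u ∈ U, a ×ˢ b ⊆ u := by
  choose a ha hxa B hB hab using hU.exists_prod_refinement_of_mem
  obtain ⟨t, ht⟩ := CompactSpace.elim_nhds_subcover a fun x => (ha x).mem_nhds (hxa x)
  refine ⟨a '' t, commonRefinement t B, ⟨?_, ?_⟩, isOpenCovering_commonRefinement hB, ?_⟩
  · rintro _ ⟨x, -, rfl⟩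
    exact ha x
  · rw [sUnion_image]
    exact ht
  · rintro _ ⟨x, hx, rfl⟩ c hc
    obtain ⟨b, hb, hcb⟩ := exists_mem_superset_of_mem_commonRefinement hc hx
    obtain ⟨u, hu, hbu⟩ := hab x b hb
    exact ⟨u, hu, (prod_mono subset_rfl hcb).trans hbu⟩

end Rectangles

section CSpace

variable {X Y : Type*} [TopologicalSpace X] [TopologicalSpace Y]

/-- In a subsingleton space any two distinct sets are disjoint, so the covers themselves work. -/
theorem IsCSpace.of_subsingleton [Subsingleton X] : IsCSpace X := by
  rw [isCSpace_iff]
  intro U hU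
  refine ⟨U, fun i => ⟨(hU i).1, ?_, fun u hu => ⟨u, hu, subset_rfl⟩⟩, ?_⟩
  · intro s _ t _ hst
    refine disjoint_left.2 fun x hxs hxt => hst ?_
    rw [eq_univ_of_forall fun y => (Subsingleton.elim x y ▸ hxs : y ∈ s),
      eq_univ_of_forall fun y => (Subsingleton.elim x y ▸ hxt : y ∈ t)]
  · exact eq_univ_of_univ_subset ((hU 0).2 ▸ sUnion_mono (subset_iUnion U 0))

theorem IsCSpace.of_homeomorph (e : X ≃ₜ Y) (hX : IsCSpace X) : IsCSpace Y := by
  rw [isCSpace_iff] at hX ⊢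
  intro U hU
  obtain ⟨V, hV, hVcov⟩ := hX _ fun i => (hU i).preimage e.continuous
  refine ⟨fun i => (e '' ·) '' V i, fun i => (hV i).image_homeomorph e,
    eq_univ_of_forall fun y => ?_⟩
  obtain ⟨v, hv, hyv⟩ := mem_sUnion.1 (hVcov ▸ mem_univ (e.symm y))
  obtain ⟨i, hvi⟩ := mem_iUnion.1 hv
  exact ⟨e '' v, mem_iUnion.2 ⟨i, v, hvi, rfl⟩, e.apply_symm_apply y ▸ mem_image_of_mem e hyv⟩

theorem IsCSpace.exists_finite_refinement [CompactSpace X] (hX : IsCSpace X)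
    {U : ℕ → Set (Set X)} (hU : ∀ i, IsOpenCovering (U i)) :
    ∃ (s : Finset ℕ) (V : ℕ → Set (Set X)), (∀ i, IsDisjointOpenRefinement (V i) (U i)) ∧
      (∀ i ∉ s, V i = ∅) ∧ ⋃₀ ⋃ i, V i = univ := by
  obtain ⟨V, hV, hVcov⟩ := isCSpace_iff.1 hX U hU
  obtain ⟨s, hs⟩ := isCompact_univ.elim_finite_subcover (fun i => ⋃₀ V i)
    (fun i => isOpen_sUnion (hV i).1) (by rw [← sUnion_iUnion, hVcov])
  refine ⟨s, fun i => if i ∈ s then V i else ∅, fun i => ?_, fun i hi => if_neg hi,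
    eq_univ_of_forall fun x => ?_⟩
  · dsimp only
    split_ifs
    · exact hV i
    · exact isDisjointOpenRefinement_empty _
  · obtain ⟨i, hi, v, hv, hxv⟩ := mem_iUnion₂.1 (hs (mem_univ x))
    exact ⟨v, mem_iUnion.2 ⟨i, by simpa [hi] using hv⟩, hxv⟩

theorem IsCSpace.prod [CompactSpace X] [CompactSpace Y] (hX : IsCSpace X) (hY : IsCSpace Y) :
    IsCSpace (X × Y) := by
  rw [isCSpace_iff]
  intro U hU
  choose A B hA hB hAB using fun n => (hU n).exists_prod_refinement
  choose s F hF hFs hFcov using fun i => hX.exists_finite_refinement fun j => hA (Nat.pair i j)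
  obtain ⟨G, hG, hGcov⟩ :=
    isCSpace_iff.1 hY (fun i => commonRefinement (s i) fun j => B (Nat.pair i j))
      fun i => isOpenCovering_commonRefinement fun j => hB _
  have hrefine (i j : ℕ) :
      IsDisjointOpenRefinement (image2 (· ×ˢ ·) (F i j) (G i)) (U (Nat.pair i j)) := by
    by_cases hj : j ∈ s i
    · exact (hF i j).image2_prod ((hG i).of_refines fun c hc =>
        exists_mem_superset_of_mem_commonRefinement hc hj) (hAB _)
    · rw [hFs i j hj, image2_empty_left]
      exact isDisjointOpenRefinement_empty _
  refine ⟨fun n => image2 (· ×ˢ ·) (F n.unpair.1 n.unpair.2) (G n.unpair.1),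
    fun n => by simpa only [Nat.pair_unpair] using hrefine n.unpair.1 n.unpair.2,
    eq_univ_of_forall ?_⟩
  rintro ⟨x, y⟩
  obtain ⟨g, hg, hyg⟩ := mem_sUnion.1 (hGcov ▸ mem_univ y)
  obtain ⟨i, hgi⟩ := mem_iUnion.1 hg
  obtain ⟨f, hf, hxf⟩ := mem_sUnion.1 ((hFcov i) ▸ mem_univ x)
  obtain ⟨j, hfj⟩ := mem_iUnion.1 hf
  refine ⟨f ×ˢ g, mem_iUnion.2 ⟨Nat.pair i j, ?_⟩, hxf, hyg⟩
  simpa only [Nat.unpair_pair] using mem_image2_of_mem hfj hgi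

theorem IsCSpace.pi_of_card_eq (n : ℕ) :
    ∀ {ι : Type u} [Fintype ι] (X : ι → Type v) [∀ i, TopologicalSpace (X i)]
      [∀ i, CompactSpace (X i)], Fintype.card ι = n → (∀ i, IsCSpace (X i)) →
        IsCSpace (∀ i, X i) := by
  induction n with
  | zero =>
    intro ι _ X _ _ hcard _
    have : IsEmpty ι := Fintype.card_eq_zero_iff.1 hcard
    exact .of_subsingleton
  | succ n ih =>
    intro ι _ X _ _ hcard h
    obtain ⟨i⟩ : Nonempty ι := Fintype.card_pos_iff.1 (by omega)
    classical
    have hrest : IsCSpace (∀ j : { j // j ≠ i }, X j) :=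
      ih (fun j : { j // j ≠ i } => X j) (by simp [Fintype.card_subtype_compl, hcard]) fun j => h j
    exact ((h i).prod hrest).of_homeomorph (Homeomorph.piSplitAt i X).symm

end CSpace

theorem stmt14_general (ι : Type*) [Fintype ι] (X : ι → Type*)
    [∀ i, TopologicalSpace (X i)] [∀ i, CompactSpace (X i)]
    (h : ∀ i, IsCSpace (X i)) :
    IsCSpace (∀ i, X i) :=
  IsCSpace.pi_of_card_eq _ X rfl h

/-- A finite product of compact metrizable C-spaces is a C-space (in particular `K^p` is a
C-space for a compact metrizable C-space `K`). -/
theorem stmt14 (ι : Type*) [Fintype ι] (X : ι → Type*)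
    [∀ i, TopologicalSpace (X i)] [∀ i, CompactSpace (X i)] [∀ i, MetrizableSpace (X i)]
    (h : ∀ i, IsCSpace (X i)) :
    IsCSpace (∀ i, X i) :=
  stmt14_general ι X h
end

section
/- Let f : Q → Y be a continuous map from a compact metrizable space Q onto a subset of a compact metrizable space Y such that every fiber f^{-1}(y) is a C-space and Y is a C-space. Then Q is a C-space. Consequently, if Q is strongly infinite-dimensional and Y is a C-space, some fiber of f fails to be a C-space (and in particular is uncountable). -/
open Set TopologicalSpace

/-- Separate a family of compact sets, disjoint along a relation, by open sets. -/
lemma aux_sep {X ι : Type*} [TopologicalSpace X] [T2Space X] [Finite ι]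
    (R : ι → ι → Prop) (c H : ι → Set X)
    (hc : ∀ i, IsCompact (c i)) (hH : ∀ i, IsOpen (H i)) (hsub : ∀ i, c i ⊆ H i)
    (hdisj : ∀ i j, R i j → Disjoint (c i) (c j)) :
    ∃ G : ι → Set X, (∀ i, IsOpen (G i)) ∧ (∀ i, c i ⊆ G i) ∧ (∀ i, G i ⊆ H i) ∧
      ∀ i j, R i j → Disjoint (G i) (G j) := by
  classical
  have key : ∀ i j : ι, ∃ AB : Set X × Set X, IsOpen AB.1 ∧ IsOpen AB.2 ∧
      c i ⊆ AB.1 ∧ c j ⊆ AB.2 ∧ (R i j → Disjoint AB.1 AB.2) := by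
    intro i j
    by_cases h : R i j
    · obtain ⟨A, B, hA, hB, hcA, hcB, hAB⟩ :=
        SeparatedNhds.of_isCompact_isCompact (hc i) (hc j) (hdisj i j h)
      exact ⟨(A, B), hA, hB, hcA, hcB, fun _ => hAB⟩
    · exact ⟨(univ, univ), isOpen_univ, isOpen_univ, subset_univ _, subset_univ _,
        fun hr => absurd hr h⟩
  choose AB hA hB hcA hcB hAB using key
  refine ⟨fun i => H i ∩ ⋂ j, ((AB i j).1 ∩ (AB j i).2), ?_, ?_, ?_, ?_⟩
  · exact fun i => (hH i).inter (isOpen_iInter_of_finite fun j => (hA i j).inter (hB j i))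
  · exact fun i => subset_inter (hsub i) (subset_iInter fun j => subset_inter (hcA i j) (hcB j i))
  · exact fun i => inter_subset_left
  · intro i j hr
    have h1 : (H i ∩ ⋂ j', ((AB i j').1 ∩ (AB j' i).2)) ⊆ (AB i j).1 :=
      inter_subset_right.trans ((iInter_subset _ j).trans inter_subset_left)
    have h2 : (H j ∩ ⋂ j', ((AB j j').1 ∩ (AB j' j).2)) ⊆ (AB i j).2 :=
      inter_subset_right.trans ((iInter_subset _ i).trans inter_subset_right)
    exact (hAB i j hr).mono h1 h2

/-- For a closed map, an open set around a fiber contains the preimage of an open nbhd. -/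
lemma aux_tube {Q Y : Type*} [TopologicalSpace Q] [CompactSpace Q] [TopologicalSpace Y]
    [T2Space Y] {f : Q → Y} (hf : Continuous f) {y : Y} {E : Set Q}
    (hE : IsOpen E) (hFE : f ⁻¹' {y} ⊆ E) :
    ∃ W : Set Y, IsOpen W ∧ y ∈ W ∧ f ⁻¹' W ⊆ E := by
  refine ⟨(f '' Eᶜ)ᶜ, (hf.isClosedMap _ hE.isClosed_compl).isOpen_compl, ?_, ?_⟩
  · intro hy
    obtain ⟨x, hx, hfx⟩ := hy
    exact hx (hFE (by simp [hfx]))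
  · intro x hx
    by_contra hxE
    exact hx ⟨x, hxE, rfl⟩

/-- Fiber step: around each fiber we can produce the data of a "local C-structure". -/
lemma aux_fiber_step {Q Y : Type*} [TopologicalSpace Q] [CompactSpace Q] [T2Space Q]
    [TopologicalSpace Y] [T2Space Y] {f : Q → Y} (hf : Continuous f)
    (U : ℕ → Set (Set Q)) (hU : ∀ i, (∀ u ∈ U i, IsOpen u) ∧ ⋃₀ U i = univ)
    (y : Y) (hfib : IsCSpace ↥(f ⁻¹' {y})) :
    ∃ W : Set Y, IsOpen W ∧ y ∈ W ∧ ∃ 𝒢 : ℕ → Set (Set Q),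
      (∀ n, ∀ G ∈ 𝒢 n, IsOpen G) ∧ (∀ n, (𝒢 n).PairwiseDisjoint id) ∧
      (∀ n, ∀ G ∈ 𝒢 n, ∃ u ∈ U n, G ⊆ u) ∧ f ⁻¹' W ⊆ ⋃ n, ⋃₀ 𝒢 n := by
  classical
  set F : Set Q := f ⁻¹' {y} with hF
  have hFclosed : IsClosed F := IsClosed.preimage hf isClosed_singleton
  haveI : CompactSpace ↥F := isCompact_iff_compactSpace.mp hFclosed.isCompact
  -- restricted covers
  set U' : ℕ → Set (Set ↥F) := fun n => (fun u => Subtype.val ⁻¹' u) '' U n with hU'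
  have hU'h : ∀ n, (∀ u ∈ U' n, IsOpen u) ∧ ⋃₀ U' n = univ := by
    intro n
    constructor
    · rintro u ⟨u₀, hu₀, rfl⟩
      exact ((hU n).1 u₀ hu₀).preimage continuous_subtype_val
    · apply eq_univ_iff_forall.mpr
      intro x
      have : (x : Q) ∈ ⋃₀ U n := by rw [(hU n).2]; trivial
      obtain ⟨u₀, hu₀, hxu⟩ := this
      exact ⟨Subtype.val ⁻¹' u₀, ⟨u₀, hu₀, rfl⟩, hxu⟩
  obtain ⟨V', hV'props, hV'cov⟩ := hfib U' hU'h
  -- finite subcover of the fiber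
  set ι : Type _ := (n : ℕ) × ↥(V' n) with hι
  have hcov : univ ⊆ ⋃ p : ι, (p.2 : Set ↥F) := by
    intro x _
    have : x ∈ ⋃₀ ⋃ i, V' i := by rw [hV'cov]; trivial
    obtain ⟨v, hv, hxv⟩ := this
    obtain ⟨_, ⟨n, rfl⟩, hvn⟩ := hv
    exact mem_iUnion.mpr ⟨⟨n, ⟨v, hvn⟩⟩, hxv⟩
  obtain ⟨t, ht⟩ := isCompact_univ.elim_finite_subcover (fun p : ι => (p.2 : Set ↥F))
    (fun p => (hV'props p.1).1 p.2 p.2.2) hcov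
  -- extend each member to an open set in Q inside a member of U
  have hext : ∀ p : ι, ∃ H : Set Q, ∃ u ∈ U p.1, IsOpen H ∧
      Subtype.val ⁻¹' H = (p.2 : Set ↥F) ∧ H ⊆ u := by
    intro p
    obtain ⟨u, hu, hsu⟩ := (hV'props p.1).2.2 p.2 p.2.2
    obtain ⟨u₀, hu₀, rfl⟩ := hu
    obtain ⟨O, hO, hOv⟩ := isOpen_induced_iff.mp ((hV'props p.1).1 p.2 p.2.2)
    refine ⟨O ∩ u₀, u₀, hu₀, hO.inter ((hU p.1).1 u₀ hu₀), ?_, inter_subset_right⟩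
    rw [preimage_inter, hOv]
    exact inter_eq_left.mpr hsu
  choose H u hu hHopen hHval hHu using hext
  -- shrink inside the fiber
  have huf : ∀ (x : ↥F), x ∈ (univ : Set ↥F) →
      {q : {p : ι // p ∈ t} | x ∈ (q.1.2 : Set ↥F)}.Finite := fun x _ => Set.toFinite _
  obtain ⟨v, hvcov, hvopen, hvcl⟩ := exists_subset_iUnion_closure_subset
    (isClosed_univ : IsClosed (univ : Set ↥F))
    (fun q : {p : ι // p ∈ t} => (hV'props q.1.1).1 q.1.2 q.1.2.2) huf
    (by intro x hx
        obtain ⟨p, hp, hxp⟩ := mem_iUnion₂.mp (ht hx)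
        exact mem_iUnion.mpr ⟨⟨p, hp⟩, hxp⟩)
  -- compact shrunk sets in Q
  set c : {p : ι // p ∈ t} → Set Q := fun q => Subtype.val '' closure (v q) with hc
  have hccomp : ∀ q, IsCompact (c q) :=
    fun q => (isClosed_closure.isCompact).image continuous_subtype_val
  have hcH : ∀ q, c q ⊆ H q.1 := by
    intro q
    rw [hc]
    refine image_subset_iff.mpr ?_
    rw [hHval q.1]
    exact hvcl q
  have hcdisj : ∀ q q' : {p : ι // p ∈ t}, (q ≠ q' ∧ q.1.1 = q'.1.1) →
      Disjoint (c q) (c q') := by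
    rintro q q' ⟨hne, hnn⟩
    have hsets : (q.1.2 : Set ↥F) ≠ (q'.1.2 : Set ↥F) := by
      intro hEq
      apply hne
      apply Subtype.ext
      obtain ⟨⟨n1, v1⟩, hq⟩ := q
      obtain ⟨⟨n2, v2⟩, hq'⟩ := q'
      simp only at hnn hEq
      subst hnn
      exact congrArg (Sigma.mk n1) (Subtype.ext hEq)
    have hdv : Disjoint (q.1.2 : Set ↥F) (q'.1.2 : Set ↥F) := by
      have := (hV'props q.1.1).2.1
      exact this q.1.2.2 (by rw [hnn]; exact q'.1.2.2) hsets
    have : Disjoint (closure (v q)) (closure (v q')) :=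
      hdv.mono (hvcl q) (hvcl q')
    exact (Set.disjoint_image_iff Subtype.val_injective).mpr this
  obtain ⟨G, hGopen, hGc, hGH, hGdisj⟩ := aux_sep
    (fun q q' => q ≠ q' ∧ q.1.1 = q'.1.1) c (fun q => H q.1)
    hccomp (fun q => hHopen q.1) hcH hcdisj
  -- the union of the G's contains the fiber
  have hFE : F ⊆ ⋃ q, G q := by
    intro x hx
    have : (⟨x, hx⟩ : ↥F) ∈ ⋃ q, v q := hvcov (mem_univ _)
    obtain ⟨q, hxq⟩ := mem_iUnion.mp this
    exact mem_iUnion.mpr ⟨q, hGc q ⟨⟨x, hx⟩, subset_closure hxq, rfl⟩⟩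
  obtain ⟨W, hWopen, hyW, hWE⟩ := aux_tube hf (isOpen_iUnion hGopen) hFE
  refine ⟨W, hWopen, hyW, fun n => {s | ∃ q : {p : ι // p ∈ t}, q.1.1 = n ∧ s = G q},
    ?_, ?_, ?_, ?_⟩
  · rintro n s ⟨q, _, rfl⟩
    exact hGopen q
  · intro n s hs s' hs' hne
    obtain ⟨q, hqn, rfl⟩ := hs
    obtain ⟨q', hqn', rfl⟩ := hs'
    exact hGdisj q q' ⟨fun h => hne (by rw [h]), hqn.trans hqn'.symm⟩
  · rintro n s ⟨q, hqn, rfl⟩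
    exact ⟨u q.1, hqn ▸ hu q.1, (hGH q).trans (hHu q.1)⟩
  · intro x hx
    obtain ⟨q, hxq⟩ := mem_iUnion.mp (hWE hx)
    exact mem_iUnion.mpr ⟨q.1.1, G q, ⟨q, rfl, rfl⟩, hxq⟩

/-- The fiber theorem, main part. -/
lemma aux_fiber_theorem (Q Y : Type*) [TopologicalSpace Q] [CompactSpace Q] [T2Space Q]
    [TopologicalSpace Y] [T2Space Y] (f : Q → Y) (hf : Continuous f)
    (hY : IsCSpace Y) (hfib : ∀ y : Y, IsCSpace ↥(f ⁻¹' {y})) : IsCSpace Q := by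
  classical
  intro U hU
  by_cases hQ : Nonempty Q
  swap
  · refine ⟨fun _ => ∅, fun i => ⟨fun v hv => absurd hv (notMem_empty v), by
      simp [Set.PairwiseDisjoint, Set.Pairwise], fun v hv => absurd hv (notMem_empty v)⟩, ?_⟩
    simp only [iUnion_empty, sUnion_empty]
    exact eq_univ_iff_forall.mpr fun x => absurd ⟨x⟩ hQ
  haveI : Nonempty Y := ⟨f hQ.some⟩
  -- for each k (block) and y, get the local data
  have hstep : ∀ k : ℕ, ∀ y : Y, ∃ W : Set Y, IsOpen W ∧ y ∈ W ∧ ∃ 𝒢 : ℕ → Set (Set Q),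
      (∀ n, ∀ G ∈ 𝒢 n, IsOpen G) ∧ (∀ n, (𝒢 n).PairwiseDisjoint id) ∧
      (∀ n, ∀ G ∈ 𝒢 n, ∃ u ∈ U (Nat.pair k n), G ⊆ u) ∧ f ⁻¹' W ⊆ ⋃ n, ⋃₀ 𝒢 n := by
    intro k y
    exact aux_fiber_step hf (fun n => U (Nat.pair k n)) (fun n => hU (Nat.pair k n)) y (hfib y)
  choose W hWopen hyW 𝒢 h𝒢open h𝒢disj h𝒢ref h𝒢cov using hstep
  -- apply the C-property of Y to the covers {W k y : y}
  have hYU : ∀ k, (∀ u ∈ range (W k), IsOpen u) ∧ ⋃₀ range (W k) = univ := by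
    intro k
    constructor
    · rintro u ⟨y, rfl⟩; exact hWopen k y
    · exact eq_univ_iff_forall.mpr fun z => ⟨W k z, ⟨z, rfl⟩, hyW k z⟩
  obtain ⟨𝒪, h𝒪props, h𝒪cov⟩ := hY (fun k => range (W k)) hYU
  -- choose a center for each member of 𝒪 k
  have hyc : ∀ k (O : Set Y), ∃ y : Y, O ∈ 𝒪 k → O ⊆ W k y := by
    intro k O
    by_cases hO : O ∈ 𝒪 k
    · obtain ⟨u, ⟨y, rfl⟩, hOu⟩ := (h𝒪props k).2.2 O hO
      exact ⟨y, fun _ => hOu⟩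
    · exact ⟨Classical.arbitrary Y, fun h => absurd h hO⟩
  choose yc hyc using hyc
  refine ⟨fun m => {s | ∃ O ∈ 𝒪 m.unpair.1,
      ∃ G ∈ 𝒢 m.unpair.1 (yc m.unpair.1 O) m.unpair.2, s = G ∩ f ⁻¹' O}, ?_, ?_⟩
  · intro m
    refine ⟨?_, ?_, ?_⟩
    · rintro v ⟨O, hO, G, hG, rfl⟩
      exact (h𝒢open _ _ _ G hG).inter (((h𝒪props m.unpair.1).1 O hO).preimage hf)
    · intro s hs s' hs' hne
      obtain ⟨O, hO, G, hG, rfl⟩ := hs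
      obtain ⟨O', hO', G', hG', rfl⟩ := hs'
      by_cases hOO : O = O'
      · subst hOO
        have hGG : G ≠ G' := fun h => hne (by rw [h])
        exact ((h𝒢disj _ _ _ hG hG' hGG).mono inter_subset_left inter_subset_left)
      · have : Disjoint O O' := (h𝒪props m.unpair.1).2.1 hO hO' hOO
        exact ((this.preimage f).mono inter_subset_right inter_subset_right)
    · rintro v ⟨O, hO, G, hG, rfl⟩
      obtain ⟨u, hu, hGu⟩ := h𝒢ref m.unpair.1 (yc m.unpair.1 O) m.unpair.2 G hG
      rw [Nat.pair_unpair] at hu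
      exact ⟨u, hu, inter_subset_left.trans hGu⟩
  · apply eq_univ_iff_forall.mpr
    intro x
    have : f x ∈ ⋃₀ ⋃ k, 𝒪 k := by rw [h𝒪cov]; trivial
    obtain ⟨O, hO, hfxO⟩ := this
    obtain ⟨_, ⟨k, rfl⟩, hOk⟩ := hO
    have hOW : O ⊆ W k (yc k O) := hyc k O hOk
    have hxW : x ∈ f ⁻¹' W k (yc k O) := hOW hfxO
    obtain ⟨n, hn⟩ := mem_iUnion.mp (h𝒢cov k (yc k O) hxW)
    obtain ⟨G, hG, hxG⟩ := hn
    refine ⟨G ∩ f ⁻¹' O, ⟨_, ⟨Nat.pair k n, rfl⟩, ?_⟩, hxG, hfxO⟩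
    refine ⟨O, ?_, G, ?_, rfl⟩
    · rw [Nat.unpair_pair]; exact hOk
    · rw [Nat.unpair_pair]; exact hG

/-- A strongly infinite-dimensional normal space is not a C-space. -/
lemma aux_sid_not_cspace {X : Type*} [TopologicalSpace X] [NormalSpace X]
    (hSID : StronglyInfiniteDimensional X) (hC : IsCSpace X) : False := by
  classical
  obtain ⟨A, B, hEss⟩ := hSID
  -- choose open sets with disjoint closures around A i and B i
  have hsep : ∀ i, ∃ P R : Set X, IsOpen P ∧ IsOpen R ∧ A i ⊆ P ∧ B i ⊆ R ∧
      Disjoint (closure P) (closure R) := by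
    intro i
    obtain ⟨hAc, hBc, hAB⟩ := hEss.1 i
    obtain ⟨P, R₀, hP, hR₀, hAP, hBR₀, hPR₀⟩ := NormalSpace.normal (A i) (B i) hAc hBc hAB
    have hclP : closure P ⊆ R₀ᶜ :=
      closure_minimal (subset_compl_iff_disjoint_right.mpr hPR₀) hR₀.isClosed_compl
    have hclPB : Disjoint (closure P) (B i) := disjoint_compl_left.mono hclP hBR₀
    obtain ⟨S, R, hS, hR, hclPS, hBR, hSR⟩ :=
      NormalSpace.normal (closure P) (B i) isClosed_closure hBc hclPB
    refine ⟨P, R, hP, hR, hAP, hBR, ?_⟩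
    have hclR : closure R ⊆ Sᶜ :=
      closure_minimal (subset_compl_iff_disjoint_right.mpr hSR.symm) hS.isClosed_compl
    exact disjoint_compl_right.mono hclPS hclR
  choose P R hPopen hRopen hAP hBR hPR using hsep
  -- covers
  set U : ℕ → Set (Set X) := fun i => {(closure (P i))ᶜ, (closure (R i))ᶜ} with hUdef
  have hU : ∀ i, (∀ u ∈ U i, IsOpen u) ∧ ⋃₀ U i = univ := by
    intro i
    constructor
    · rintro u (rfl | rfl)
      · exact isClosed_closure.isOpen_compl
      · exact isClosed_closure.isOpen_compl
    · apply eq_univ_iff_forall.mpr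
      intro x
      by_cases hx : x ∈ closure (P i)
      · exact ⟨(closure (R i))ᶜ, Or.inr rfl, subset_compl_iff_disjoint_right.mpr (hPR i) hx⟩
      · exact ⟨(closure (P i))ᶜ, Or.inl rfl, hx⟩
  obtain ⟨V, hVprops, hVcov⟩ := hC U hU
  -- build partitions
  set 𝔾 : ℕ → Set (Set X) := fun i => {v ∈ V i | Disjoint v (closure (P i))} with h𝔾
  set ℍ : ℕ → Set (Set X) := fun i => V i \ 𝔾 i with hℍ
  have hHdisjR : ∀ i, ∀ v ∈ ℍ i, Disjoint v (closure (R i)) := by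
    intro i v hv
    obtain ⟨hvV, hvn⟩ := hv
    obtain ⟨u, hu, hvu⟩ := (hVprops i).2.2 v hvV
    rcases hu with rfl | rfl
    · exact absurd ⟨hvV, disjoint_compl_left.mono_left hvu⟩ hvn
    · exact disjoint_compl_left.mono_left hvu
  set L : ℕ → Set X := fun i => ((P i ∪ ⋃₀ ℍ i) ∪ (R i ∪ ⋃₀ 𝔾 i))ᶜ with hL
  have hpart : ∀ i, IsPartitionBetween X (L i) (A i) (B i) := by
    intro i
    have hHopen : IsOpen (⋃₀ ℍ i) := isOpen_sUnion fun v hv => (hVprops i).1 v hv.1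
    have hGopen : IsOpen (⋃₀ 𝔾 i) := isOpen_sUnion fun v hv => (hVprops i).1 v hv.1
    refine ⟨(((hPopen i).union hHopen).union ((hRopen i).union hGopen)).isClosed_compl,
      P i ∪ ⋃₀ ℍ i, R i ∪ ⋃₀ 𝔾 i, (hPopen i).union hHopen, (hRopen i).union hGopen,
      (hAP i).trans subset_union_left, (hBR i).trans subset_union_left, ?_, compl_compl _⟩
    -- disjointness
    rw [Set.disjoint_union_left]
    constructor
    · rw [Set.disjoint_union_right]
      refine ⟨(hPR i).mono subset_closure subset_closure, ?_⟩
      rw [Set.disjoint_sUnion_right]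
      intro v hv
      exact (hv.2.mono_right subset_closure).symm
    · rw [Set.disjoint_union_right]
      constructor
      · rw [Set.disjoint_sUnion_left]
        intro v hv
        exact (hHdisjR i v hv).mono_right subset_closure
      · rw [Set.disjoint_sUnion_left]
        intro v hv
        rw [Set.disjoint_sUnion_right]
        intro w hw
        have hvw : v ≠ w := by
          rintro rfl
          exact hv.2 hw
        exact (hVprops i).2.1 hv.1 hw.1 hvw
  obtain ⟨x, hx⟩ := hEss.2 L hpart
  have hxV : x ∈ ⋃₀ ⋃ i, V i := by rw [hVcov]; trivial
  obtain ⟨v, hv, hxv⟩ := hxV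
  obtain ⟨_, ⟨i, rfl⟩, hvV⟩ := hv
  have hxLi : x ∈ L i := mem_iInter.mp hx i
  apply hxLi
  by_cases hvG : v ∈ 𝔾 i
  · exact Or.inr (Or.inr ⟨v, hvG, hxv⟩)
  · exact Or.inl (Or.inr ⟨v, ⟨hvV, hvG⟩, hxv⟩)

/-- A countable compact metrizable space is a C-space. -/
lemma aux_countable_cspace (X : Type*) [TopologicalSpace X] [CompactSpace X]
    [MetrizableSpace X] [Countable X] : IsCSpace X := by
  classical
  letI : MetricSpace X := TopologicalSpace.metrizableSpaceMetric X
  intro U hU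
  -- clopen balls around each point inside a member of U 0
  have hball : ∀ x : X, ∃ b : Set X, ∃ u ∈ U 0, IsClopen b ∧ x ∈ b ∧ b ⊆ u := by
    intro x
    have hx : x ∈ ⋃₀ U 0 := by rw [(hU 0).2]; trivial
    obtain ⟨u, hu, hxu⟩ := hx
    obtain ⟨ε, hε, hballu⟩ := Metric.isOpen_iff.mp ((hU 0).1 u hu) x hxu
    -- pick a radius avoiding all distances from x
    have hD : (range (dist x)).Countable := countable_range _
    have : ¬ (Ioo (0:ℝ) ε ⊆ range (dist x)) := by
      intro hsub
      have h1 : (Ioo (0:ℝ) ε).Countable := hD.mono hsub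
      have h2 : (Cardinal.mk (Ioo (0:ℝ) ε)) = Cardinal.continuum := Cardinal.mk_Ioo_real hε
      rw [← Set.countable_coe_iff, ← Cardinal.mk_le_aleph0_iff, h2] at h1
      exact absurd h1 (not_le.mpr Cardinal.aleph0_lt_continuum)
    obtain ⟨r, hrIoo, hrD⟩ := not_subset.mp this
    have hropen : IsOpen (Metric.ball x r) := Metric.isOpen_ball
    have hrclosed : IsClosed (Metric.ball x r) := by
      apply isClosed_of_closure_subset
      intro z hz
      have hzle : dist z x ≤ r := Metric.mem_closedBall.mp (Metric.closure_ball_subset_closedBall hz)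
      have hne : dist x z ≠ r := fun h => hrD ⟨z, h⟩
      rw [dist_comm] at hne
      exact Metric.mem_ball.mpr (lt_of_le_of_ne hzle hne)
    refine ⟨Metric.ball x r, u, hu, ⟨hrclosed, hropen⟩, Metric.mem_ball_self hrIoo.1, ?_⟩
    exact (Metric.ball_subset_ball hrIoo.2.le).trans hballu
  choose b u hu hbclopen hxb hbu using hball
  -- finite subcover
  obtain ⟨t, ht⟩ := isCompact_univ.elim_finite_subcover b (fun x => (hbclopen x).2)
    (fun x _ => mem_iUnion.mpr ⟨x, hxb x⟩)
  set l := t.toList with hl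
  set n := l.length with hn
  -- disjointified pieces
  set D : Fin n → Set X := fun i => b (l.get i) \ ⋃ j : Fin n, ⋃ (_ : (j:ℕ) < (i:ℕ)), b (l.get j)
    with hD
  have hDopen : ∀ i, IsOpen (D i) := by
    intro i
    have hcl : IsClosed (⋃ j : Fin n, ⋃ (_ : (j:ℕ) < (i:ℕ)), b (l.get j)) :=
      isClosed_iUnion_of_finite fun j => isClosed_iUnion_of_finite fun _ => (hbclopen _).1
    exact (hbclopen _).2.sdiff hcl
  have hDsub : ∀ i, D i ⊆ b (l.get i) := fun i => diff_subset
  have hDdisj : ∀ i j : Fin n, i ≠ j → Disjoint (D i) (D j) := by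
    have key : ∀ i j : Fin n, (i:ℕ) < (j:ℕ) → Disjoint (D i) (D j) := by
      intro i j hij
      rw [Set.disjoint_left]
      intro x hxi hxj
      exact hxj.2 (mem_iUnion.mpr ⟨i, mem_iUnion.mpr ⟨hij, hxi.1⟩⟩)
    intro i j hij
    rcases lt_or_gt_of_ne (fun h => hij (Fin.ext h)) with h | h
    · exact key i j h
    · exact (key j i h).symm
  have hDcov : ∀ x : X, ∃ i : Fin n, x ∈ D i := by
    intro x
    have hx : x ∈ ⋃ x' ∈ t, b x' := ht trivial
    obtain ⟨x', hx't, hxb'⟩ := mem_iUnion₂.mp hx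
    have : ∃ i : Fin n, x ∈ b (l.get i) := by
      have : x' ∈ l := Finset.mem_toList.mpr hx't
      obtain ⟨i, hi⟩ := List.mem_iff_get.mp this
      exact ⟨i, hi ▸ hxb'⟩
    -- take minimal such index
    obtain ⟨i, hi⟩ := this
    have hex : ∃ m : ℕ, ∃ h : m < n, x ∈ b (l.get ⟨m, h⟩) := ⟨i, i.2, hi⟩
    classical
    let m := Nat.find hex
    obtain ⟨hm, hxm⟩ := Nat.find_spec hex
    refine ⟨⟨m, hm⟩, hxm, ?_⟩
    intro hmem
    obtain ⟨j, hj⟩ := mem_iUnion.mp hmem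
    obtain ⟨hjm, hxj⟩ := mem_iUnion.mp hj
    exact Nat.find_min hex (m := (j:ℕ)) hjm ⟨j.2, (by simpa using hxj)⟩
  refine ⟨fun m => if m = 0 then {s | ∃ i : Fin n, s = D i} else ∅, ?_, ?_⟩
  · intro m
    by_cases hm : m = 0
    · subst hm
      simp only [if_pos rfl]
      refine ⟨?_, ?_, ?_⟩
      · rintro v ⟨i, rfl⟩; exact hDopen i
      · intro s hs s' hs' hne
        obtain ⟨i, rfl⟩ := hs
        obtain ⟨i', rfl⟩ := hs'
        exact hDdisj i i' (fun h => hne (by rw [h]))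
      · rintro v ⟨i, rfl⟩
        exact ⟨u (l.get i), hu _, (hDsub i).trans (hbu _)⟩
    · simp only [if_neg hm]
      exact ⟨fun v hv => absurd hv (notMem_empty v), by simp [Set.PairwiseDisjoint, Set.Pairwise],
        fun v hv => absurd hv (notMem_empty v)⟩
  · apply eq_univ_iff_forall.mpr
    intro x
    obtain ⟨i, hi⟩ := hDcov x
    exact ⟨D i, mem_iUnion.mpr ⟨0, by simp only [if_pos rfl]; exact ⟨i, rfl⟩⟩, hi⟩

/-- Fiber theorem: a continuous map between compact metrizable spaces with C-space fibers
and C-space codomain has C-space domain; consequently, if the domain is strongly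
infinite-dimensional and the codomain is a C-space, some fiber is not a C-space and is
uncountable. -/
theorem stmt15 :
    (∀ (Q Y : Type) [TopologicalSpace Q] [CompactSpace Q] [MetrizableSpace Q]
        [TopologicalSpace Y] [CompactSpace Y] [MetrizableSpace Y] (f : Q → Y),
      Continuous f → IsCSpace Y → (∀ y : Y, IsCSpace ↥(f ⁻¹' {y})) → IsCSpace Q) ∧
    (∀ (Q Y : Type) [TopologicalSpace Q] [CompactSpace Q] [MetrizableSpace Q]
        [TopologicalSpace Y] [CompactSpace Y] [MetrizableSpace Y] (f : Q → Y),
      Continuous f → StronglyInfiniteDimensional Q → IsCSpace Y →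
        ∃ y : Y, ¬ IsCSpace ↥(f ⁻¹' {y}) ∧ ¬ (f ⁻¹' {y}).Countable) := by
  have part1 : ∀ (Q Y : Type) [TopologicalSpace Q] [CompactSpace Q] [MetrizableSpace Q]
      [TopologicalSpace Y] [CompactSpace Y] [MetrizableSpace Y] (f : Q → Y),
      Continuous f → IsCSpace Y → (∀ y : Y, IsCSpace ↥(f ⁻¹' {y})) → IsCSpace Q := by
    intro Q Y _ _ _ _ _ _ f hf hY hfib
    exact aux_fiber_theorem Q Y f hf hY hfib
  refine ⟨part1, ?_⟩
  intro Q Y _ _ _ _ _ _ f hf hSID hY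
  by_contra h
  push_neg at h
  have hfibC : ∀ y : Y, IsCSpace ↥(f ⁻¹' {y}) := by
    intro y
    by_contra hy
    have hcnt : (f ⁻¹' {y}).Countable := h y hy
    haveI : Countable ↥(f ⁻¹' {y}) := hcnt.to_subtype
    haveI : CompactSpace ↥(f ⁻¹' {y}) :=
      isCompact_iff_compactSpace.mp (IsClosed.preimage hf isClosed_singleton).isCompact
    exact hy (aux_countable_cspace ↥(f ⁻¹' {y}))
  exact aux_sid_not_cspace hSID (part1 Q Y f hf hY hfibC)
end
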